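/- arXiv:1610.00926 — 7 statements merged into one kernel-verified Lean document; each statement's English description precedes it below -/
import Mathlib

section
/- Let $K$ be a field, $R = K[x_{ij}, y_j : 1 \le i,j \le n]$, $X$ the generic $n \times n$ matrix, $Y$ the generic column vector, and $g_i$ the entries of $XY$. Then $\det(X) \cdot y_n$ belongs to the ideal $I_1(XY) = \langle g_1, \ldots, g_n \rangle$, but neither $\det(X)$ nor $y_n$ belongs to $I_1(XY)$. In particular, $I_1(XY)$ is not a prime ideal. -/
set_option maxHeartbeats 1000000

open MvPolynomial Matrix Finset

private lemma map_span_eval_ne {σ ι : Type*} {K : Type*} [Field K]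
    (g : ι → MvPolynomial σ K) (φ : σ → K) (p : MvPolynomial σ K)
    (hg0 : ∀ i : ι, MvPolynomial.eval φ (g i) = 0)
    (hp : MvPolynomial.eval φ p ≠ 0) :
    p ∉ Ideal.span (Set.range g) := by
  intro hmem
  have h1 : MvPolynomial.eval φ p ∈ Ideal.map (MvPolynomial.eval φ) (Ideal.span (Set.range g)) :=
    Ideal.mem_map_of_mem _ hmem
  rw [Ideal.map_span] at h1
  have h3 : Ideal.span ((MvPolynomial.eval φ) '' Set.range g) ≤ ⊥ := by
    rw [Ideal.span_le]
    rintro x ⟨q, ⟨i, rfl⟩, rfl⟩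
    simpa using hg0 i
  exact hp (h3 h1)

/-- `det X * y_n ∈ I₁(XY)`, but `det X ∉ I₁(XY)` and `y_n ∉ I₁(XY)`;
in particular `I₁(XY)` is not prime. -/
theorem det_mul_yn_mem_but_not_factors
    (K : Type*) [Field K] (n : ℕ)
    (Xmat : Matrix (Fin (n + 1)) (Fin (n + 1))
      (MvPolynomial (Fin (n + 1) × Fin (n + 1) ⊕ Fin (n + 1)) K))
    (hX : ∀ i j, Xmat i j = MvPolynomial.X (Sum.inl (i, j)))
    (Yv : Fin (n + 1) → MvPolynomial (Fin (n + 1) × Fin (n + 1) ⊕ Fin (n + 1)) K)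
    (hY : ∀ j, Yv j = MvPolynomial.X (Sum.inr j))
    (g : Fin (n + 1) → MvPolynomial (Fin (n + 1) × Fin (n + 1) ⊕ Fin (n + 1)) K)
    (hg : ∀ i, g i = ∑ k, Xmat i k * Yv k)
    (I : Ideal (MvPolynomial (Fin (n + 1) × Fin (n + 1) ⊕ Fin (n + 1)) K))
    (hI : I = Ideal.span (Set.range g)) :
    Xmat.det * Yv (Fin.last n) ∈ I ∧ Xmat.det ∉ I ∧ Yv (Fin.last n) ∉ I ∧ ¬ I.IsPrime := by
  have hgm : ∀ i, g i = (Xmat *ᵥ Yv) i := by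
    intro i; rw [hg]; rfl
  have hmem : Xmat.det * Yv (Fin.last n) ∈ I := by
    have key : Xmat.det • Yv = Xmat.adjugate *ᵥ (Xmat *ᵥ Yv) := by
      rw [Matrix.mulVec_mulVec, Matrix.adjugate_mul, Matrix.smul_mulVec,
        Matrix.one_mulVec]
    have heq : Xmat.det * Yv (Fin.last n) = ∑ k, Xmat.adjugate (Fin.last n) k * g k := by
      have h := congrFun key (Fin.last n)
      simp only [Pi.smul_apply, smul_eq_mul] at h
      rw [h, Matrix.mulVec, dotProduct]
      exact Finset.sum_congr rfl fun k _ => by rw [hgm k]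
    rw [heq, hI]
    exact Ideal.sum_mem _ fun k _ =>
      Ideal.mul_mem_left _ _ (Ideal.subset_span ⟨k, rfl⟩)
  have hdetnot : Xmat.det ∉ I := by
    rw [hI]
    apply map_span_eval_ne g
      (Sum.elim (fun p : Fin (n+1) × Fin (n+1) => if p.1 = p.2 then (1:K) else 0) (fun _ => 0))
    · intro i
      rw [hg]
      simp [hY]
    · have hdet : MvPolynomial.eval
          (Sum.elim (fun p : Fin (n+1) × Fin (n+1) => if p.1 = p.2 then (1:K) else 0)
            (fun _ => 0)) Xmat.det
          = Matrix.det (1 : Matrix (Fin (n+1)) (Fin (n+1)) K) := by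
        rw [show (MvPolynomial.eval
            (Sum.elim (fun p : Fin (n+1) × Fin (n+1) => if p.1 = p.2 then (1:K) else 0)
              (fun _ => 0))) Xmat.det = _ from RingHom.map_det _ Xmat]
        congr 1
        ext i j
        simp [Matrix.map_apply, hX, Matrix.one_apply, RingHom.mapMatrix_apply]
      rw [hdet, Matrix.det_one]
      exact one_ne_zero
  have hynot : Yv (Fin.last n) ∉ I := by
    rw [hI]
    apply map_span_eval_ne g (Sum.elim (fun _ => (0:K)) (fun _ => 1))
    · intro i
      rw [hg]
      simp [hX]
    · simp [hY]
  refine ⟨hmem, hdetnot, hynot, fun hP => ?_⟩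
  rcases hP.mem_or_mem hmem with h | h
  · exact hdetnot h
  · exact hynot h
end

section
/- Let $K$ be a field, $R = K[x_{ij}, y_j : 1 \le i \le m, 1 \le j \le n]$ with $m \le n$, $X$ the $m \times n$ generic matrix, $Y$ the generic $n \times 1$ column, and $g_1, \ldots, g_m$ the entries of $XY$. Then $g_1, \ldots, g_m$ is a regular sequence in $R$. -/
open MvPolynomial Matrix Finset


open MvPolynomial Finset

section PolyStep

variable {A : Type*} [CommRing A]

/-- A linear polynomial `C α * X + C β` with `α` a nonzerodivisor kills nothing. -/
lemma mul_linear_eq_zero {α β : A} (hα : ∀ a : A, α * a = 0 → a = 0)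
    (p : Polynomial A) (h : p * (Polynomial.C α * Polynomial.X + Polynomial.C β) = 0) :
    p = 0 := by
  by_contra hp
  have hco : (p * (Polynomial.C α * Polynomial.X + Polynomial.C β)).coeff (p.natDegree + 1) = 0 := by
    rw [h]; simp
  rw [mul_add, Polynomial.coeff_add] at hco
  have h1 : (p * (Polynomial.C α * Polynomial.X)).coeff (p.natDegree + 1) = α * p.coeff p.natDegree := by
    rw [show p * (Polynomial.C α * Polynomial.X) = Polynomial.C α * (p * Polynomial.X) by ring,
      Polynomial.coeff_C_mul, Polynomial.coeff_mul_X]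
  have h2 : (p * Polynomial.C β).coeff (p.natDegree + 1) = 0 := by
    rw [Polynomial.coeff_mul_C, Polynomial.coeff_eq_zero_of_natDegree_lt (by omega), zero_mul]
  rw [h1, h2, add_zero] at hco
  exact hp (Polynomial.leadingCoeff_eq_zero.mp (hα _ hco))

lemma poly_step (I : Ideal A) (α β : A) (hreg : ∀ a, α * a ∈ I → a ∈ I)
    (Q : Polynomial A)
    (h : Q * (Polynomial.C α * Polynomial.X + Polynomial.C β) ∈ I.map (Polynomial.C : A →+* Polynomial A)) :
    Q ∈ I.map (Polynomial.C : A →+* Polynomial A) := by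
  set φ := Ideal.Quotient.mk I
  have key : ∀ p : Polynomial A, p ∈ I.map (Polynomial.C : A →+* Polynomial A) ↔ p.map φ = 0 := by
    intro p
    rw [Ideal.mem_map_C_iff, Polynomial.ext_iff]
    simp [Polynomial.coeff_map, Ideal.Quotient.eq_zero_iff_mem, φ]
  rw [key] at h ⊢
  rw [Polynomial.map_mul, Polynomial.map_add, Polynomial.map_mul, Polynomial.map_C,
    Polynomial.map_C, Polynomial.map_X] at h
  refine mul_linear_eq_zero (α := φ α) ?_ _ h
  intro a ha
  obtain ⟨x, rfl⟩ := Ideal.Quotient.mk_surjective (I := I) a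
  rw [← _root_.map_mul] at ha
  rw [Ideal.Quotient.eq_zero_iff_mem] at ha ⊢
  exact hreg _ ha

end PolyStep

section Split

variable {K : Type*} [CommRing K] {σ : Type*} [DecidableEq σ]

lemma optionEquivLeft_rename_some {τ : Type*} (p : MvPolynomial τ K) :
    optionEquivLeft K τ (rename some p) = Polynomial.C p := by
  induction p using MvPolynomial.induction_on with
  | C r => simp [rename_C, optionEquivLeft_C]
  | add p q hp hq => rw [map_add, map_add, hp, hq, map_add]
  | mul_X p x hp => rw [_root_.map_mul, _root_.map_mul, hp, rename_X, optionEquivLeft_X_some, ← _root_.map_mul]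

/-- Splitting off one variable: if `α` is a nonzerodivisor mod `span G` and none of
`G`, `α`, `β` involve the variable `v₀`, then `α * X v₀ + β` is a nonzerodivisor
mod `span G`. -/
lemma split_lemma (v₀ : σ) (G : Set (MvPolynomial σ K)) (α β q : MvPolynomial σ K)
    (hG : G ⊆ Set.range (rename (Subtype.val : {v // v ≠ v₀} → σ)))
    (hα : α ∈ Set.range (rename (Subtype.val : {v // v ≠ v₀} → σ)))
    (hβ : β ∈ Set.range (rename (Subtype.val : {v // v ≠ v₀} → σ)))
    (hreg : ∀ a, α * a ∈ Ideal.span G → a ∈ Ideal.span G)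
    (hq : q * (α * X v₀ + β) ∈ Ideal.span G) : q ∈ Ideal.span G := by
  classical
  set ι : MvPolynomial {v // v ≠ v₀} K →ₐ[K] MvPolynomial σ K := rename Subtype.val with hι
  set Φ : MvPolynomial σ K ≃ₐ[K] Polynomial (MvPolynomial {v // v ≠ v₀} K) :=
    (renameEquiv K (Equiv.optionSubtypeNe v₀).symm).trans
      (optionEquivLeft K {v // v ≠ v₀}) with hΦ
  have hfun : (⇑(Equiv.optionSubtypeNe v₀).symm ∘ (Subtype.val : {v // v ≠ v₀} → σ))
      = some := by
    funext b
    exact Equiv.optionSubtypeNe_symm_of_ne b.2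
  have hΦι : ∀ a : MvPolynomial {v // v ≠ v₀} K, Φ (ι a) = Polynomial.C a := by
    intro a
    have h0 : Φ (ι a) = optionEquivLeft K {v // v ≠ v₀}
        ((rename ⇑(Equiv.optionSubtypeNe v₀).symm) (rename Subtype.val a)) := rfl
    rw [h0, rename_rename, hfun]
    exact optionEquivLeft_rename_some a
  have hΦX : Φ (X v₀) = Polynomial.X := by
    have h0 : Φ (X v₀) = optionEquivLeft K {v // v ≠ v₀}
        ((rename ⇑(Equiv.optionSubtypeNe v₀).symm) (X v₀)) := rfl
    rw [h0, rename_X, Equiv.optionSubtypeNe_symm_self, optionEquivLeft_X_none]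
  -- choose preimages
  choose G₀fn hG₀fn using fun (x : G) => hG x.2
  obtain ⟨α₀, rfl⟩ := hα
  obtain ⟨β₀, rfl⟩ := hβ
  set G₀ : Set (MvPolynomial {v // v ≠ v₀} K) := Set.range G₀fn with hG₀
  have hGim : G = ⇑ι '' G₀ := by
    ext x
    constructor
    · intro hx; exact ⟨G₀fn ⟨x, hx⟩, ⟨⟨x, hx⟩, rfl⟩, hG₀fn ⟨x, hx⟩⟩
    · rintro ⟨y, ⟨z, rfl⟩, rfl⟩
      rw [hG₀fn z]; exact z.2
  set I₀ : Ideal (MvPolynomial {v // v ≠ v₀} K) := Ideal.span G₀ with hI₀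
  have hmapspan : ∀ x : MvPolynomial σ K,
      x ∈ Ideal.span G ↔ Φ x ∈ I₀.map (Polynomial.C : _ →+* _) := by
    intro x
    have h1 : Ideal.span G = Ideal.comap Φ (I₀.map (Polynomial.C : _ →+* _)) := by
      have h2 : I₀.map (Polynomial.C : _ →+* _) = Ideal.map Φ (Ideal.span G) := by
        rw [hGim, hI₀, Ideal.map_span, Ideal.map_span, ← Set.image_comp]
        congr 1
        exact (Set.image_congr (fun a _ => hΦι a)).symm
      rw [h2, Ideal.comap_map_of_bijective _ Φ.bijective]
    rw [h1]; rfl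
  rw [hmapspan]
  have hreg₀ : ∀ a, α₀ * a ∈ I₀ → a ∈ I₀ := by
    intro a ha
    have h3 : Polynomial.C (α₀ * a) ∈ I₀.map (Polynomial.C : _ →+* _) :=
      Ideal.mem_map_of_mem _ ha
    rw [← hΦι (α₀ * a), ← hmapspan, _root_.map_mul] at h3
    have h4 := hreg _ h3
    rw [hmapspan, hΦι] at h4
    have h5 := Ideal.mem_map_C_iff.mp h4 0
    rwa [Polynomial.coeff_C_zero] at h5
  refine poly_step I₀ α₀ β₀ hreg₀ (Φ q) ?_
  rw [hmapspan] at hq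
  rw [_root_.map_mul, map_add, _root_.map_mul, hΦX, hΦι, hΦι] at hq
  exact hq

end Split

section Base

variable {K : Type*} [CommRing K] {σ : Type*} [DecidableEq σ]

lemma var_ideal_nzd (T : Set σ) (v : σ) (hv : v ∉ T) (a : MvPolynomial σ K)
    (h : a * X v ∈ Ideal.span (X '' T : Set (MvPolynomial σ K))) :
    a ∈ Ideal.span (X '' T : Set (MvPolynomial σ K)) := by
  rw [mem_ideal_span_X_image] at h ⊢
  intro mo hmo
  have hmem : mo + Finsupp.single v 1 ∈ (a * X v).support := by
    rw [support_mul_X]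
    exact Finset.mem_map.mpr ⟨mo, hmo, rfl⟩
  obtain ⟨i, hiT, hi⟩ := h _ hmem
  refine ⟨i, hiT, ?_⟩
  have hne : i ≠ v := fun he => hv (he ▸ hiT)
  rwa [Finsupp.add_apply, Finsupp.single_apply, if_neg (fun he => hne he.symm),
    add_zero] at hi

end Base

section Main

variable {K : Type*} [CommRing K] {m n : ℕ}

private noncomputable def genP (j : Fin m) (s : Finset (Fin n)) :
    MvPolynomial (Fin m × Fin n ⊕ Fin n) K :=
  ∑ k ∈ s, X (Sum.inl (j, k)) * X (Sum.inr k)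

private def Jset (i : ℕ) (s : Finset (Fin n)) :
    Set (MvPolynomial (Fin m × Fin n ⊕ Fin n) K) :=
  {p | ∃ j : Fin m, j.1 < i ∧ p = genP j s} ∪
    {p | ∃ k : Fin n, k ∉ s ∧ p = X (Sum.inr k)}

private lemma genP_split (j : Fin m) (s : Finset (Fin n)) {c : Fin n} (hc : c ∈ s) :
    (genP j s : MvPolynomial (Fin m × Fin n ⊕ Fin n) K)
      = X (Sum.inl (j, c)) * X (Sum.inr c) + genP j (s.erase c) :=
  (Finset.add_sum_erase s _ hc).symm

private lemma genP_mem_range (r : Fin m) (c' : Fin n) (j : Fin m) (s : Finset (Fin n))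
    (hj : j ≠ r ∨ c' ∉ s) :
    (genP j s : MvPolynomial (Fin m × Fin n ⊕ Fin n) K) ∈
      Set.range (rename (Subtype.val :
        {v : Fin m × Fin n ⊕ Fin n // v ≠ Sum.inl (r, c')} → _)) := by
  have hne : ∀ k : Fin n, k ∈ s →
      (Sum.inl (j, k) : Fin m × Fin n ⊕ Fin n) ≠ Sum.inl (r, c') := by
    intro k hk he
    injection he with h1
    rcases hj with hj' | hj'
    · exact hj' (congrArg Prod.fst h1)
    · exact hj' ((show k = c' from congrArg Prod.snd h1) ▸ hk)
  refine ⟨∑ k ∈ s.attach, X ⟨Sum.inl (j, k.1), hne k.1 k.2⟩ * X ⟨Sum.inr k.1, by simp⟩, ?_⟩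
  rw [map_sum]
  refine Eq.trans (Finset.sum_congr rfl fun k _ => by rw [_root_.map_mul, rename_X, rename_X]) ?_
  exact Finset.sum_attach s (fun k => (X (Sum.inl (j, k)) * X (Sum.inr k) :
    MvPolynomial (Fin m × Fin n ⊕ Fin n) K))

private lemma X_inr_mem_range (r : Fin m) (c' k : Fin n) :
    (X (Sum.inr k) : MvPolynomial (Fin m × Fin n ⊕ Fin n) K) ∈
      Set.range (rename (Subtype.val :
        {v : Fin m × Fin n ⊕ Fin n // v ≠ Sum.inl (r, c')} → _)) :=
  ⟨X ⟨Sum.inr k, by simp⟩, rename_X _ _⟩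

private lemma Elem (i : ℕ)
    (hD : ∀ (s : Finset (Fin n)) (c : Fin n), i < s.card → c ∈ s →
      ∀ a : MvPolynomial (Fin m × Fin n ⊕ Fin n) K,
        a * X (Sum.inr c) ∈ Ideal.span (Jset i s) → a ∈ Ideal.span (Jset i s))
    (s : Finset (Fin n)) (hcard : i < s.card) (r : Fin m) (hr : i ≤ r.1)
    (q : MvPolynomial (Fin m × Fin n ⊕ Fin n) K)
    (hq : q * genP r s ∈ Ideal.span (Jset i s)) : q ∈ Ideal.span (Jset i s) := by
  classical
  obtain ⟨c', hc'⟩ := Finset.card_pos.mp (show 0 < s.card by omega)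
  refine split_lemma (Sum.inl (r, c')) (Jset i s) (X (Sum.inr c'))
    (genP r (s.erase c')) q ?_ ?_ ?_ ?_ ?_
  · rintro p (⟨j, hj, rfl⟩ | ⟨k, hk, rfl⟩)
    · refine genP_mem_range r c' j s (Or.inl (fun he => ?_))
      rw [he] at hj; omega
    · exact X_inr_mem_range r c' k
  · exact X_inr_mem_range r c' c'
  · exact genP_mem_range r c' r (s.erase c') (Or.inr (Finset.notMem_erase c' s))
  · intro a ha
    rw [mul_comm] at ha
    exact hD s c' hcard hc' a ha
  · rw [show X (Sum.inr c') * X (Sum.inl (r, c')) + genP r (s.erase c')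
        = genP r s from by rw [genP_split r s hc']; ring]
    exact hq

private lemma span_Jset_erase (i : ℕ) (s : Finset (Fin n)) {c : Fin n} (hc : c ∈ s) :
    Ideal.span (Jset (K := K) (m := m) i (s.erase c))
      = Ideal.span (Jset i s ∪ {X (Sum.inr c)}) := by
  apply le_antisymm
  · rw [Ideal.span_le]
    rintro p (⟨j, hj, rfl⟩ | ⟨k, hk, rfl⟩)
    · have h1 : (genP j (s.erase c) : MvPolynomial (Fin m × Fin n ⊕ Fin n) K)
          = genP j s - X (Sum.inl (j, c)) * X (Sum.inr c) := by
        rw [genP_split j s hc]; ring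
      rw [h1]
      refine sub_mem (Ideal.subset_span (Or.inl (Or.inl ⟨j, hj, rfl⟩))) ?_
      exact Ideal.mul_mem_left _ _ (Ideal.subset_span (Or.inr rfl))
    · by_cases hkc : k = c
      · exact Ideal.subset_span (Or.inr (hkc ▸ rfl))
      · exact Ideal.subset_span (Or.inl (Or.inr
          ⟨k, fun hks => hk (Finset.mem_erase.mpr ⟨hkc, hks⟩), rfl⟩))
  · rw [Ideal.span_le]
    rintro p ((⟨j, hj, rfl⟩ | ⟨k, hk, rfl⟩) | hp)
    · rw [genP_split j s hc]
      refine add_mem ?_ (Ideal.subset_span (Or.inl ⟨j, hj, rfl⟩))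
      exact Ideal.mul_mem_left _ _ (Ideal.subset_span
        (Or.inr ⟨c, Finset.notMem_erase c s, rfl⟩))
    · exact Ideal.subset_span (Or.inr ⟨k, fun hke => hk (Finset.mem_of_mem_erase hke), rfl⟩)
    · rw [Set.mem_singleton_iff.mp hp]
      exact Ideal.subset_span (Or.inr ⟨c, Finset.notMem_erase c s, rfl⟩)

private lemma Dlem : ∀ (i : ℕ) (s : Finset (Fin n)) (c : Fin n), i < s.card → c ∈ s →
    ∀ a : MvPolynomial (Fin m × Fin n ⊕ Fin n) K,
      a * X (Sum.inr c) ∈ Ideal.span (Jset i s) → a ∈ Ideal.span (Jset i s) := by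
  intro i
  induction i with
  | zero =>
    intro s c _ hc a ha
    have hJ : (Jset (K := K) (m := m) 0 s)
        = X '' (Sum.inr '' {k : Fin n | k ∉ s}) := by
      ext p
      constructor
      · rintro (⟨j, hj, rfl⟩ | ⟨k, hk, rfl⟩)
        · omega
        · exact ⟨Sum.inr k, ⟨k, hk, rfl⟩, rfl⟩
      · rintro ⟨v, ⟨k, hk, rfl⟩, rfl⟩
        exact Or.inr ⟨k, hk, rfl⟩
    rw [hJ] at ha ⊢
    refine var_ideal_nzd _ _ ?_ a ha
    rintro ⟨k, hk, hke⟩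
    exact hk ((Sum.inr.inj hke) ▸ hc)
  | succ i ih =>
    intro s c hcard hc a ha
    by_cases him : i < m
    · set r : Fin m := ⟨i, him⟩ with hrdef
      have hsplit : Jset (K := K) (i+1) s = Jset i s ∪ {genP r s} := by
        ext p
        constructor
        · rintro (⟨j, hj, rfl⟩ | ⟨k, hk, rfl⟩)
          · by_cases hji : j.1 < i
            · exact Or.inl (Or.inl ⟨j, hji, rfl⟩)
            · have hjr : j = r := by
                have : j.1 = i := by omega
                exact Fin.ext (by rw [this])
              exact Or.inr (hjr ▸ rfl)
          · exact Or.inl (Or.inr ⟨k, hk, rfl⟩)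
        · rintro ((⟨j, hj, rfl⟩ | ⟨k, hk, rfl⟩) | hp)
          · exact Or.inl ⟨j, by omega, rfl⟩
          · exact Or.inr ⟨k, hk, rfl⟩
          · refine Or.inl ⟨r, Nat.lt_succ_self i, ?_⟩
            rw [Set.mem_singleton_iff.mp hp]
      have hspan : Ideal.span (Jset (K := K) (i+1) s)
          = Ideal.span {genP r s} ⊔ Ideal.span (Jset i s) := by
        rw [hsplit, Set.union_comm, Ideal.span_union]
      rw [hspan] at ha ⊢
      obtain ⟨qq, w, hw, heq⟩ := Ideal.mem_span_singleton_sup.mp ha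
      -- heq : qq * genP r s + w = a * X (inr c)
      have hclaim : qq ∈ Ideal.span (Jset (K := K) i (s.erase c)) := by
        refine Elem i ih (s.erase c)
          (by rw [Finset.card_erase_of_mem hc]; omega) r (Nat.le_refl i) qq ?_
        rw [span_Jset_erase i s hc]
        have h1 : qq * genP r (s.erase c)
            = a * X (Sum.inr c) - w - qq * (X (Sum.inl (r, c)) * X (Sum.inr c)) := by
          linear_combination heq - qq * (genP_split (K := K) r s hc)
        rw [h1]
        refine sub_mem (sub_mem ?_ ?_) ?_
        · exact Ideal.mul_mem_left _ _ (Ideal.subset_span (Or.inr rfl))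
        · exact Ideal.span_mono Set.subset_union_left hw
        · exact Ideal.mul_mem_left _ _ (Ideal.mul_mem_left _ _
            (Ideal.subset_span (Or.inr rfl)))
      rw [span_Jset_erase i s hc, Set.union_comm, Ideal.span_union] at hclaim
      obtain ⟨q', w', hw', heq'⟩ := Ideal.mem_span_singleton_sup.mp hclaim
      -- heq' : q' * X (inr c) + w' = qq
      have hfin : (a - q' * genP r s) * X (Sum.inr c) ∈ Ideal.span (Jset (K := K) i s) := by
        have h2 : (a - q' * genP r s) * X (Sum.inr c) = w' * genP r s + w := by
          linear_combination -heq - genP r s * heq'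
        rw [h2]
        exact add_mem (Ideal.mul_mem_right _ _ hw') hw
      have h3 := ih s c (by omega) hc _ hfin
      have h4 : a = q' * genP r s + (a - q' * genP r s) := by ring
      rw [h4]
      refine add_mem (Submodule.mem_sup_left ?_) (Submodule.mem_sup_right h3)
      exact Ideal.mul_mem_left _ _ (Ideal.subset_span rfl)
    · have hJ : Jset (K := K) (m := m) (i+1) s = Jset i s := by
        ext p
        constructor
        · rintro (⟨j, hj, rfl⟩ | ⟨k, hk, rfl⟩)
          · exact Or.inl ⟨j, by omega, rfl⟩
          · exact Or.inr ⟨k, hk, rfl⟩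
        · rintro (⟨j, hj, rfl⟩ | ⟨k, hk, rfl⟩)
          · exact Or.inl ⟨j, by omega, rfl⟩
          · exact Or.inr ⟨k, hk, rfl⟩
      rw [hJ] at ha ⊢
      exact ih s c (by omega) hc a ha

end Main

/-- For the generic `m × n` matrix `X` with `m ≤ n` and generic column `Y`,
the entries `g_1, …, g_m` of `XY` form a regular sequence in `K[x_{ij}, y_j]`. -/
theorem entries_XY_regular_generic
    (K : Type*) [Field K] (m n : ℕ) (hmn : m ≤ n)
    (g : Fin m → MvPolynomial (Fin m × Fin n ⊕ Fin n) K)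
    (hg : ∀ i, g i = ∑ k, MvPolynomial.X (Sum.inl (i, k)) * MvPolynomial.X (Sum.inr k)) :
    RingTheory.Sequence.IsRegular (MvPolynomial (Fin m × Fin n ⊕ Fin n) K) (List.ofFn g) := by
  classical
  have smul_top : ∀ I : Ideal (MvPolynomial (Fin m × Fin n ⊕ Fin n) K),
      (I • (⊤ : Submodule (MvPolynomial (Fin m × Fin n ⊕ Fin n) K)
        (MvPolynomial (Fin m × Fin n ⊕ Fin n) K))) = I := fun I => by
    rw [smul_eq_mul, Ideal.mul_top]
  have hgen : ∀ j : Fin m, g j = genP j Finset.univ := by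
    intro j; rw [hg j]; rfl
  have hofList : ∀ i : ℕ, i ≤ m →
      Ideal.ofList ((List.ofFn g).take i) = Ideal.span (Jset (K := K) i Finset.univ) := by
    intro i hi
    unfold Ideal.ofList
    congr 1
    ext p
    simp only [Set.mem_setOf_eq]
    constructor
    · intro hp
      rw [List.mem_iff_getElem] at hp
      obtain ⟨j, hj, rfl⟩ := hp
      have hjlen : j < m := by
        have := hj
        simp only [List.length_take, List.length_ofFn] at this
        omega
      have hjlt : j < i := by
        have := hj
        simp only [List.length_take, List.length_ofFn] at this
        omega
      rw [List.getElem_take, List.getElem_ofFn]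
      exact Or.inl ⟨⟨j, by simpa using hjlen⟩, hjlt, (hgen _)⟩
    · rintro (⟨j, hj, rfl⟩ | ⟨k, hk, rfl⟩)
      · rw [List.mem_iff_getElem]
        refine ⟨j.1, ?_, ?_⟩
        · simp only [List.length_take, List.length_ofFn]; omega
        · rw [List.getElem_take, List.getElem_ofFn]
          rw [show (⟨j.1, by simpa using j.2⟩ : Fin m) = j from Fin.ext rfl]
          exact hgen j
      · exact absurd (Finset.mem_univ k) hk
  constructor
  · -- weakly regular
    constructor
    intro i hlen
    have him : i < m := by simpa using hlen
    have hin : i < n := by omega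
    -- identify the quotient ideal
    rw [smul_top, hofList i (le_of_lt him)]
    intro a b hab
    obtain ⟨a, rfl⟩ := Submodule.Quotient.mk_surjective _ a
    obtain ⟨b, rfl⟩ := Submodule.Quotient.mk_surjective _ b
    simp only [← Submodule.Quotient.mk_smul] at hab
    have hmem := (Submodule.Quotient.eq _).mp hab
    rw [Submodule.Quotient.eq]
    have hEl : ((List.ofFn g)[i] • a - (List.ofFn g)[i] • b)
        = (a - b) * genP ⟨i, him⟩ Finset.univ := by
      rw [List.getElem_ofFn]
      rw [show (⟨i, by simpa using him⟩ : Fin m) = ⟨i, him⟩ from rfl]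
      rw [hgen ⟨i, him⟩]
      simp only [smul_eq_mul]
      ring
    rw [hEl] at hmem
    have := Elem i (fun s c h1 h2 a ha => Dlem i s c h1 h2 a ha)
      Finset.univ (by simpa using hin) ⟨i, him⟩ (le_refl i) (a - b) hmem
    simpa using this
  · -- the ideal is proper
    intro htop
    have h1 : (1 : MvPolynomial (Fin m × Fin n ⊕ Fin n) K) ∈ Ideal.ofList (List.ofFn g) • (⊤ : Submodule (MvPolynomial (Fin m × Fin n ⊕ Fin n) K) (MvPolynomial (Fin m × Fin n ⊕ Fin n) K)) := by
      rw [← htop]; trivial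
    rw [smul_top] at h1
    have hker : Ideal.ofList (List.ofFn g) ≤ RingHom.ker (constantCoeff (R := K)) := by
      unfold Ideal.ofList
      rw [Ideal.span_le]
      intro p hp
      simp only [Set.mem_setOf_eq, List.mem_ofFn] at hp
      obtain ⟨j, rfl⟩ := hp
      simp only [SetLike.mem_coe, RingHom.mem_ker]
      rw [hg j]
      simp
    have := hker h1
    rw [RingHom.mem_ker, _root_.map_one] at this
    exact one_ne_zero this
end

section
/- Let $K$ be a field, $X$ the generic symmetric $n \times n$ matrix (with entries $x_{ij} = x_{ji}$), $Y$ the generic $n \times 1$ column, and $g_1, \ldots, g_n$ the entries of $XY$ in the polynomial ring $R = K[x_{ij} (i \le j), y_j]$. Then $g_1, \ldots, g_n$ is a regular sequence in $R$. -/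
/-!
For disjoint `A B ⊆ {1, …, n}` with `|A| + |B| < n` the ideal
`J(A, B) = (g_i : i ∈ A) + (y_j : j ∈ B)` is prime, by induction on `A`. To adjoin `g_a`, write
`g_a = y_a x_aa + h` with `h` free of `x_aa`. The other generators do not involve `x_aa` either,
so modulo `J(A, B)` the ring becomes `(S/I)[x_aa]` for a domain `S/I`, and we quotient by the
linear polynomial `p x_aa + h` with `p = y_a`. Over a domain `D` the ideal `(p X + h)` is prime
as soon as `(p)` is prime and `h ∉ (p)`: it is the kernel of `X ↦ -h/p` into `D[1/p]`, since `p`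
is a nonzerodivisor modulo it. Here `(p)` is prime because `J(A, B ∪ {a})` is, and
`h ∉ J(A, B ∪ {a})` is seen by evaluating at `x_ac = y_c = 1` for an index `c ∉ A ∪ B ∪ {a}`,
which exists since `|A| + |B| < n`. Taking `B = ∅` and `A = {1, …, i}`, each `g_{i+1}` lies
outside the prime ideal `(g_1, …, g_i)`, so it is a nonzerodivisor modulo it.
-/

open Finset

namespace Polynomial

variable {D : Type*} [CommRing D] [IsDomain D] {p h : D}

theorem isSMulRegular_C_quotient_span_C_mul_X_add_C (hp : (Ideal.span {p}).IsPrime)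
    (hp0 : p ≠ 0) (hh : h ∉ Ideal.span {p}) :
    IsSMulRegular (D[X] ⧸ Ideal.span {C p * X + C h}) (C p) := by
  rw [isSMulRegular_quotient_iff_mem_of_smul_mem]
  intro f hf
  obtain ⟨q, hq⟩ := Ideal.mem_span_singleton.mp hf
  have := (Ideal.Quotient.isDomain_iff_prime _).mpr hp
  let π := Ideal.Quotient.mk (Ideal.span {p})
  have hπp : π p = 0 := Ideal.Quotient.eq_zero_iff_mem.mpr (Ideal.mem_span_singleton_self p)
  have hπh : π h ≠ 0 := fun h0 => hh (Ideal.Quotient.eq_zero_iff_mem.mp h0)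
  -- modulo `p`, the equation `C p * f = (C p * X + C h) * q` becomes `0 = C h * q`
  have hq0 : q ∈ RingHom.ker (mapRingHom π) := by
    have := congrArg (map π) hq
    simp only [smul_eq_mul, Polynomial.map_mul, Polynomial.map_add, map_C, map_X, hπp, C_0,
      zero_mul, zero_add] at this
    exact (mul_eq_zero.mp this.symm).resolve_left (C_ne_zero.mpr hπh)
  rw [ker_mapRingHom, Ideal.mk_ker, Ideal.map_span, Set.image_singleton,
    Ideal.mem_span_singleton] at hq0
  obtain ⟨q₁, rfl⟩ := hq0
  refine Ideal.mem_span_singleton.mpr ⟨q₁, mul_left_cancel₀ (C_ne_zero.mpr hp0) ?_⟩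
  rw [← smul_eq_mul, hq]
  ring

theorem isPrime_span_C_mul_X_add_C (hp : (Ideal.span {p}).IsPrime) (hp0 : p ≠ 0)
    (hh : h ∉ Ideal.span {p}) :
    (Ideal.span {C p * X + C h}).IsPrime := by
  set F := C p * X + C h
  let A := Localization.Away p
  have hle : Submonoid.powers p ≤ nonZeroDivisors D :=
    powers_le_nonZeroDivisors_of_noZeroDivisors hp0
  have : IsDomain A := IsLocalization.isDomain_of_le_nonZeroDivisors (S := A) hle
  have hinj : Function.Injective (algebraMap D A) := IsLocalization.injective A hle
  let t : A := -(algebraMap D A h * IsLocalization.Away.invSelf p)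
  have hpt : algebraMap D A p * t = -algebraMap D A h := by
    rw [mul_neg, mul_left_comm, IsLocalization.Away.mul_invSelf, mul_one]
  have hF : F.map (algebraMap D A) = C (algebraMap D A p) * (X - C t) := by
    simp only [F, Polynomial.map_add, Polynomial.map_mul, map_C, map_X, mul_sub, ← C_mul, hpt]
    rw [C_neg, sub_neg_eq_add]
  suffices Ideal.span {F} = RingHom.ker (aeval t : D[X] →ₐ[D] A) from
    this ▸ RingHom.ker_isPrime _
  refine le_antisymm ?_ fun f hf => ?_
  · rw [Ideal.span_le, Set.singleton_subset_iff, SetLike.mem_coe, RingHom.mem_ker,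
      aeval_def, eval₂_eq_eval_map, hF]
    simp
  -- `f` vanishes at `t`, so it is a multiple of `F` over `A`; then clear denominators
  obtain ⟨u, hu⟩ : X - C t ∣ f.map (algebraMap D A) := by
    rw [dvd_iff_isRoot, IsRoot, eval_map, ← aeval_def]
    exact hf
  let w := C (IsLocalization.Away.invSelf (S := A) p) * u
  have hfw : f.map (algebraMap D A) = F.map (algebraMap D A) * w := by
    rw [hu, hF, mul_mul_mul_comm, ← C_mul, IsLocalization.Away.mul_invSelf, C_1, one_mul]
  obtain ⟨_, ⟨m, rfl⟩, hb⟩ :=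
    IsLocalization.integerNormalization_spec (Submonoid.powers p) w
  have key : C p ^ m * f = F * IsLocalization.integerNormalization (Submonoid.powers p) w := by
    apply map_injective (algebraMap D A) hinj
    rw [Polynomial.map_mul, Polynomial.map_mul, hb, hfw, Polynomial.map_pow, map_C,
      Algebra.smul_def, algebraMap_apply, map_pow, C_pow]
    ring
  exact mem_of_isSMulRegular_quotient_of_smul_mem
    ((isSMulRegular_C_quotient_span_C_mul_X_add_C hp hp0 hh).pow m)
    (Ideal.mem_span_singleton.mpr ⟨_, key⟩)

theorem isPrime_map_C_sup_span_C_mul_X_add_C {S : Type*} [CommRing S] {I : Ideal S} {p h : S}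
    (hI : I.IsPrime) (hIp : (I ⊔ Ideal.span {p}).IsPrime) (hpI : p ∉ I)
    (hhIp : h ∉ I ⊔ Ideal.span {p}) :
    (I.map C ⊔ Ideal.span {C p * X + C h}).IsPrime := by
  let π := Ideal.Quotient.mk I
  have : IsDomain (S ⧸ I) := (Ideal.Quotient.isDomain_iff_prime I).mpr hI
  have hspan : Ideal.span {π p} = (I ⊔ Ideal.span {p}).map π := by
    rw [Ideal.map_sup, Ideal.map_quotient_self, bot_sup_eq, Ideal.map_span, Set.image_singleton]
  have hprime : (Ideal.span {π p}).IsPrime := hspan ▸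
    Ideal.map_isPrime_of_surjective Ideal.Quotient.mk_surjective (by simp)
  have hπp : π p ≠ 0 := fun h0 => hpI (Ideal.Quotient.eq_zero_iff_mem.mp h0)
  have hπh : π h ∉ Ideal.span {π p} := by
    rwa [hspan, Ideal.mem_quotient_iff_mem_sup, sup_comm, sup_left_idem]
  have hq : Function.Surjective (mapRingHom π) := map_surjective _ Ideal.Quotient.mk_surjective
  have := (isPrime_span_C_mul_X_add_C hprime hπp hπh).comap (mapRingHom π)
  have hF : mapRingHom π (C p * X + C h) = C (π p) * X + C (π h) := by simp
  rwa [← hF, ← Set.image_singleton, ← Ideal.map_span, Ideal.comap_map_of_surjective _ hq,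
    ← RingHom.ker_eq_comap_bot, ker_mapRingHom, Ideal.mk_ker, sup_comm] at this

end Polynomial

namespace MvPolynomial

variable {R σ : Type*} [CommRing R]

theorem isPrime_span_X_image [IsDomain R] (s : Set σ) :
    (Ideal.span (X '' s : Set (MvPolynomial σ R))).IsPrime := by
  classical
  let κ : MvPolynomial σ R →ₐ[R] MvPolynomial σ R :=
    aeval fun w => if w ∈ s then 0 else X w
  suffices Ideal.span (X '' s) = RingHom.ker κ from this ▸ RingHom.ker_isPrime _
  refine le_antisymm (Ideal.span_le.mpr ?_) fun f hf => ?_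
  · rintro _ ⟨w, hw, rfl⟩
    simp [κ, hw]
  -- `κ` is the identity modulo the ideal
  have hκ : (Ideal.Quotient.mkₐ R (Ideal.span (X '' s))).comp κ = Ideal.Quotient.mkₐ R _ := by
    ext w
    by_cases hw : w ∈ s
    · simpa [κ, hw, eq_comm (a := (0 : _ ⧸ _)), Ideal.Quotient.eq_zero_iff_mem] using
        Ideal.subset_span (Set.mem_image_of_mem (X (R := R)) hw)
    · simp [κ, hw]
  rw [← Ideal.Quotient.eq_zero_iff_mem, ← Ideal.Quotient.mkₐ_eq_mk R, ← hκ,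
    AlgHom.comp_apply, RingHom.mem_ker.mp hf, map_zero]

theorem comap_rename_map_rename {τ : Type*} {f : σ → τ} (hf : Function.Injective f)
    (I : Ideal (MvPolynomial σ R)) : (I.map (rename f)).comap (rename f) = I := by
  refine le_antisymm ((Ideal.comap_le_map_of_inverse _ (killCompl hf) _
    (killCompl_rename_app hf)).trans ?_) Ideal.le_comap_map
  exact Ideal.map_le_iff_le_comap.mpr <| Ideal.map_le_iff_le_comap.mpr fun s hs => by
    simpa [killCompl_rename_app] using hs

variable [DecidableEq σ]

noncomputable def killVar (v : σ) : MvPolynomial σ R →ₐ[R] MvPolynomial σ R :=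
  aeval (Function.update X v 0)

@[simp]
theorem killVar_X_self (v : σ) : killVar v (X v : MvPolynomial σ R) = 0 := by
  simp [killVar]

theorem killVar_X_of_ne {v w : σ} (h : w ≠ v) : killVar v (X w : MvPolynomial σ R) = X w := by
  simp [killVar, h]

@[simp]
theorem killVar_killVar (v : σ) (f : MvPolynomial σ R) :
    killVar v (killVar v f) = killVar v f := by
  rw [← AlgHom.comp_apply]
  congr 1
  ext w
  by_cases hw : w = v
  · simp [hw]
  · simp [killVar_X_of_ne hw]

theorem rename_killCompl_subtypeVal (v : σ) (f : MvPolynomial σ R) :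
    rename Subtype.val (killCompl (Subtype.val_injective (p := (· ≠ v))) f) = killVar v f := by
  rw [← AlgHom.comp_apply]
  congr 1
  refine algHom_ext fun w => ?_
  by_cases hw : w = v <;> simp [killCompl, killVar, hw, Equiv.apply_ofInjective_symm]

noncomputable def equivPolynomialSubtypeNe (v : σ) :
    MvPolynomial σ R ≃ₐ[R] Polynomial (MvPolynomial {w // w ≠ v} R) :=
  (renameEquiv R (Equiv.optionSubtypeNe v).symm).trans (optionEquivLeft R _)

theorem equivPolynomialSubtypeNe_rename (v : σ) (s : MvPolynomial {w // w ≠ v} R) :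
    equivPolynomialSubtypeNe v (rename Subtype.val s) = Polynomial.C s := by
  show ((equivPolynomialSubtypeNe v).toRingHom.comp (rename Subtype.val).toRingHom) s = _
  congr 1
  refine ringHom_ext (fun r => ?_) fun w => ?_
  · simp [equivPolynomialSubtypeNe, optionEquivLeft_C]
  · simp [equivPolynomialSubtypeNe, Equiv.optionSubtypeNe_symm_of_ne w.2, optionEquivLeft_X_some]

theorem equivPolynomialSubtypeNe_X_self (v : σ) :
    equivPolynomialSubtypeNe v (X v : MvPolynomial σ R) = Polynomial.X := by
  simp [equivPolynomialSubtypeNe, optionEquivLeft_X_none]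

theorem isPrime_sup_span_mul_X_add {v : σ} {J : Ideal (MvPolynomial σ R)}
    {p h : MvPolynomial σ R} (hJ : J.map (killVar v) = J) (hp : killVar v p = p)
    (hh : killVar v h = h) (hJprime : J.IsPrime) (hJp : (J ⊔ Ideal.span {p}).IsPrime)
    (hpJ : p ∉ J) (hhJp : h ∉ J ⊔ Ideal.span {p}) :
    (J ⊔ Ideal.span {p * X v + h}).IsPrime := by
  let ι := rename (R := R) (Subtype.val : {w // w ≠ v} → σ)
  let ρ := killCompl (R := R) (Subtype.val_injective (p := (· ≠ v)))
  let e := equivPolynomialSubtypeNe (R := R) v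
  have hιρ := rename_killCompl_subtypeVal (R := R) v
  have hcomap := comap_rename_map_rename (R := R) (Subtype.val_injective (p := (· ≠ v)))
  -- `J` is extended from the ideal `I` of `R[σ \ {v}]`, and `e` turns `J` into `I[X]`
  set I := J.comap ι
  have hJI : J = I.map ι := by
    refine le_antisymm ?_ Ideal.map_comap_le
    conv_lhs => rw [← hJ]
    refine Ideal.map_le_iff_le_comap.mpr fun f hf => ?_
    rw [Ideal.mem_comap, ← hιρ]
    refine Ideal.mem_map_of_mem ι ?_
    rw [Ideal.mem_comap, hιρ, ← hJ]
    exact Ideal.mem_map_of_mem _ hf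
  have hp' : ι (ρ p) = p := (hιρ p).trans hp
  have hh' : ι (ρ h) = h := (hιρ h).trans hh
  have hJp' : J ⊔ Ideal.span {p} = (I ⊔ Ideal.span {ρ p}).map ι := by
    rw [Ideal.map_sup, Ideal.map_span, Set.image_singleton, hp', ← hJI]
  have hIp : (I ⊔ Ideal.span {ρ p}).IsPrime := by
    rw [← hcomap (I ⊔ _), ← hJp']
    exact Ideal.comap_isPrime _ _
  have hpI : ρ p ∉ I := by rwa [Ideal.mem_comap, hp']
  have hhI : ρ h ∉ I ⊔ Ideal.span {ρ p} := by
    rwa [← hcomap (I ⊔ _), ← hJp', Ideal.mem_comap, hh']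
  have hmap : (J ⊔ Ideal.span {p * X v + h}).map e =
      I.map Polynomial.C ⊔
        Ideal.span {Polynomial.C (ρ p) * Polynomial.X + Polynomial.C (ρ h)} := by
    have hI : (I.map ι).map e = I.map Polynomial.C :=
      (Ideal.map_map ι.toRingHom e.toRingHom).trans
        (congrArg (Ideal.map · I) (RingHom.ext (equivPolynomialSubtypeNe_rename v)))
    have hF : e (p * X v + h) = Polynomial.C (ρ p) * Polynomial.X + Polynomial.C (ρ h) := by
      rw [map_add, map_mul, equivPolynomialSubtypeNe_X_self, ← equivPolynomialSubtypeNe_rename,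
        ← equivPolynomialSubtypeNe_rename, hp', hh']
    rw [Ideal.map_sup, Ideal.map_span, Set.image_singleton, hJI, hI, hF]
  rw [← Ideal.comap_map_of_bijective e e.bijective (I := J ⊔ _), hmap]
  have := Polynomial.isPrime_map_C_sup_span_C_mul_X_add_C (Ideal.comap_isPrime ι J) hIp hpI hhI
  exact Ideal.comap_isPrime _ _

end MvPolynomial

namespace RingTheory.Sequence

variable {R : Type*} [CommRing R]

theorem isRegular_of_isPrime_ofList_take {rs : List R}
    (h : ∀ i (hi : i < rs.length),
      (Ideal.ofList (rs.take i)).IsPrime ∧ rs[i] ∉ Ideal.ofList (rs.take i))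
    (htop : Ideal.ofList rs ≠ ⊤) : IsRegular R rs := by
  have hsmul (I : Ideal R) : (I • ⊤ : Submodule R R) = I := by
    rw [Ideal.smul_eq_mul, Ideal.mul_top]
  refine ⟨⟨fun i hi => ?_⟩, ?_⟩
  · rw [hsmul, isSMulRegular_quotient_iff_mem_of_smul_mem]
    obtain ⟨hprime, hnot⟩ := h i hi
    exact fun x hx => (hprime.mem_or_mem hx).resolve_left hnot
  · rw [hsmul]
    exact htop.symm

end RingTheory.Sequence

namespace Ideal

theorem ofList_take_ofFn {R : Type*} [CommRing R] {n : ℕ} (f : Fin n → R) (i : ℕ) :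
    ofList ((List.ofFn f).take i) = span (f '' {j | (j : ℕ) < i}) := by
  unfold ofList
  congr 1
  ext x
  simp only [Set.mem_ofPred_eq, List.mem_take_iff_getElem, List.length_ofFn, lt_min_iff,
    List.getElem_ofFn, Set.mem_image]
  exact ⟨fun ⟨j, hj, hx⟩ => ⟨⟨j, hj.2⟩, hj.1, hx⟩,
    fun ⟨j, hj, hx⟩ => ⟨j, ⟨hj, j.2⟩, hx⟩⟩

end Ideal

namespace SymmetricXY

open MvPolynomial

variable {n : ℕ}

abbrev Var (n : ℕ) := {p : Fin n × Fin n // p.1 ≤ p.2} ⊕ Fin n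

def xVar (i j : Fin n) : Var n := Sum.inl ⟨(min i j, max i j), min_le_max⟩

def yVar (j : Fin n) : Var n := Sum.inr j

theorem xVar_ne_yVar (i j k : Fin n) : xVar i j ≠ yVar k := by simp [xVar, yVar]

theorem yVar_injective : Function.Injective (yVar (n := n)) := fun _ _ h => Sum.inr_injective h

theorem xVar_eq_xVar_iff {i j k l : Fin n} :
    xVar i j = xVar k l ↔ min i j = min k l ∧ max i j = max k l := by
  simp [xVar, Subtype.ext_iff, Prod.ext_iff]

theorem xVar_eq_xVar_right_iff {i k c : Fin n} : xVar i c = xVar k c ↔ i = k := by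
  rw [xVar_eq_xVar_iff, Fin.ext_iff, Fin.ext_iff, Fin.ext_iff, Fin.coe_min, Fin.coe_min,
    Fin.coe_max, Fin.coe_max]
  omega

theorem xVar_eq_xVar_self_iff {i j a : Fin n} : xVar i j = xVar a a ↔ i = a ∧ j = a := by
  rw [xVar_eq_xVar_iff, Fin.ext_iff, Fin.ext_iff, Fin.ext_iff, Fin.ext_iff, Fin.coe_min,
    Fin.coe_min, Fin.coe_max, Fin.coe_max]
  omega

variable (K : Type*) [Field K]

noncomputable def entry (i : Fin n) : MvPolynomial (Var n) K := ∑ k, X (xVar i k) * X (yVar k)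

/-- The ideal `J(A, B)`. -/
noncomputable def partialIdeal (A B : Finset (Fin n)) : Ideal (MvPolynomial (Var n) K) :=
  Ideal.span (entry K '' A ∪ (fun j => X (yVar j)) '' B)

theorem partialIdeal_insert_left (a : Fin n) (A B : Finset (Fin n)) :
    partialIdeal K (insert a A) B = partialIdeal K A B ⊔ Ideal.span {entry K a} := by
  rw [partialIdeal, partialIdeal, coe_insert, Set.image_insert_eq, Set.insert_union,
    Ideal.span_insert, sup_comm]

theorem partialIdeal_insert_right (a : Fin n) (A B : Finset (Fin n)) :
    partialIdeal K A (insert a B) = partialIdeal K A B ⊔ Ideal.span {X (yVar a)} := by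
  rw [partialIdeal, partialIdeal, coe_insert, Set.image_insert_eq, Set.union_insert,
    Ideal.span_insert, sup_comm]

theorem killVar_entry_of_ne {a i : Fin n} (hi : i ≠ a) :
    killVar (xVar a a) (entry K i) = entry K i := by
  simp only [entry, map_sum, map_mul]
  refine sum_congr rfl fun k _ => ?_
  rw [killVar_X_of_ne (xVar_ne_yVar a a k).symm,
    killVar_X_of_ne fun h => hi (xVar_eq_xVar_self_iff.mp h).1]

theorem entry_eq_mul_add_killVar (a : Fin n) :
    entry K a = X (yVar a) * X (xVar a a) + killVar (xVar a a) (entry K a) := by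
  simp only [entry, ← add_sum_erase univ _ (mem_univ a), map_add, map_sum, map_mul,
    killVar_X_self, zero_mul, zero_add]
  rw [mul_comm]
  congr 1
  refine sum_congr rfl fun k hk => ?_
  rw [killVar_X_of_ne (xVar_ne_yVar a a k).symm,
    killVar_X_of_ne fun h => ne_of_mem_erase hk (xVar_eq_xVar_self_iff.mp h).2]

theorem map_killVar_partialIdeal {a : Fin n} {A : Finset (Fin n)} (haA : a ∉ A)
    (B : Finset (Fin n)) :
    (partialIdeal K A B).map (killVar (xVar a a)) = partialIdeal K A B := by
  rw [partialIdeal, Ideal.map_span, Set.image_union, Set.image_image, Set.image_image]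
  congr 2
  · exact Set.image_congr fun i hi => killVar_entry_of_ne K fun h => haA (h ▸ hi)
  · exact Set.image_congr fun j _ => killVar_X_of_ne (xVar_ne_yVar a a j).symm

def unitPoint (a c : Fin n) : Var n → K := fun v => if v = xVar a c ∨ v = yVar c then 1 else 0

theorem unitPoint_yVar (a c j : Fin n) : unitPoint K a c (yVar j) = if j = c then 1 else 0 := by
  simp [unitPoint, (xVar_ne_yVar a c j).symm, yVar_injective.eq_iff]

theorem eval_unitPoint_entry (a c i : Fin n) :
    eval (unitPoint K a c) (entry K i) = if i = a then 1 else 0 := by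
  rw [entry, map_sum, sum_eq_single c]
  · simp [unitPoint, xVar_eq_xVar_right_iff, xVar_ne_yVar]
  · intro k _ hk
    simp [unitPoint_yVar, hk]
  · simp

theorem partialIdeal_le_ker_eval_unitPoint {a c : Fin n} {A B : Finset (Fin n)} (ha : a ∉ A)
    (hc : c ∉ B) : partialIdeal K A B ≤ RingHom.ker (eval (unitPoint K a c)) := by
  refine Ideal.span_le.mpr ?_
  rintro _ (⟨i, hi, rfl⟩ | ⟨j, hj, rfl⟩)
  · simp only [SetLike.mem_coe, RingHom.mem_ker, eval_unitPoint_entry]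
    exact if_neg (by rintro rfl; exact ha hi)
  · simp only [SetLike.mem_coe, RingHom.mem_ker, eval_X, unitPoint_yVar]
    exact if_neg (by rintro rfl; exact hc hj)

theorem X_yVar_notMem_partialIdeal {a : Fin n} {A B : Finset (Fin n)} (haA : a ∉ A)
    (haB : a ∉ B) : X (yVar a) ∉ partialIdeal K A B := fun h => by
  simpa [unitPoint_yVar] using partialIdeal_le_ker_eval_unitPoint K haA haB h

theorem entry_notMem_partialIdeal {a : Fin n} {A B : Finset (Fin n)} (haA : a ∉ A)
    (haB : a ∉ B) : entry K a ∉ partialIdeal K A B := fun h => by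
  simpa [eval_unitPoint_entry] using partialIdeal_le_ker_eval_unitPoint K haA haB h

theorem killVar_entry_notMem_partialIdeal {a c : Fin n} {A B : Finset (Fin n)} (haA : a ∉ A)
    (hca : c ≠ a) (hcB : c ∉ B) :
    killVar (xVar a a) (entry K a) ∉ partialIdeal K A (insert a B) := fun h => by
  have := partialIdeal_le_ker_eval_unitPoint K haA (c := c) (by simp [hca, hcB]) h
  rw [RingHom.mem_ker, eq_sub_of_add_eq' (entry_eq_mul_add_killVar K a).symm] at this
  have hx : xVar a a ≠ xVar a c := fun h => hca (xVar_eq_xVar_self_iff.mp h.symm).2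
  simp [eval_unitPoint_entry, unitPoint, hx, xVar_ne_yVar] at this

theorem isPrime_partialIdeal {A B : Finset (Fin n)} (hAB : Disjoint A B) (hcard : #A + #B < n) :
    (partialIdeal K A B).IsPrime := by
  induction A using Finset.induction_on generalizing B with
  | empty =>
    rw [partialIdeal, coe_empty, Set.image_empty, Set.empty_union, ← Set.image_image]
    exact isPrime_span_X_image _
  | @insert a A haA ih =>
    rw [card_insert_of_notMem haA] at hcard
    have haB : a ∉ B := disjoint_left.mp hAB (mem_insert_self a A)
    have hAB' : Disjoint A B := disjoint_of_subset_left (subset_insert a A) hAB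
    obtain ⟨c, -, hc⟩ : ∃ c ∈ univ, c ∉ insert a (A ∪ B) :=
      exists_mem_notMem_of_card_lt_card <| calc
        #(insert a (A ∪ B)) ≤ #A + #B + 1 :=
          (card_insert_le _ _).trans (by gcongr; exact card_union_le _ _)
        _ < #univ := by rw [card_univ, Fintype.card_fin]; omega
    simp only [mem_insert, mem_union, not_or] at hc
    obtain ⟨hca, hcA, hcB⟩ := hc
    have hJp := (partialIdeal_insert_right K a A B).symm
    rw [partialIdeal_insert_left, entry_eq_mul_add_killVar K a]
    refine isPrime_sup_span_mul_X_add (map_killVar_partialIdeal K haA B)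
      (killVar_X_of_ne (xVar_ne_yVar a a a).symm) (killVar_killVar _ _) (ih hAB' (by omega))
      ?_ (X_yVar_notMem_partialIdeal K haA haB) ?_
    · rw [hJp]
      exact ih (disjoint_insert_right.mpr ⟨haA, hAB'⟩)
        (by rw [card_insert_of_notMem haB]; omega)
    · rw [hJp]
      exact killVar_entry_notMem_partialIdeal K haA hca hcB

end SymmetricXY

open MvPolynomial SymmetricXY RingTheory.Sequence

/-- For the generic symmetric `n × n` matrix `X` (variables `x_{ij}` for
`i ≤ j`) and the generic column `Y`, the entries of `XY` form a regular sequence in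
`K[x_{ij} (i ≤ j), y_j]`. -/
theorem entries_XY_regular_symmetric
    (K : Type*) [Field K] (n : ℕ)
    (Xmat : Matrix (Fin n) (Fin n)
      (MvPolynomial ({p : Fin n × Fin n // p.1 ≤ p.2} ⊕ Fin n) K))
    (hX : ∀ i j, Xmat i j =
      MvPolynomial.X (Sum.inl ⟨(min i j, max i j), min_le_max⟩))
    (g : Fin n → MvPolynomial ({p : Fin n × Fin n // p.1 ≤ p.2} ⊕ Fin n) K)
    (hg : ∀ i, g i = ∑ k, Xmat i k * MvPolynomial.X (Sum.inr k)) :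
    RingTheory.Sequence.IsRegular
      (MvPolynomial ({p : Fin n × Fin n // p.1 ≤ p.2} ⊕ Fin n) K) (List.ofFn g) := by
  obtain rfl : g = entry K := funext fun i => by simp only [hg, hX, entry, xVar, yVar]
  refine isRegular_of_isPrime_ofList_take (fun i hi => ?_) ?_
  · rw [List.length_ofFn] at hi
    have hprefix : Ideal.ofList ((List.ofFn (entry K)).take i) =
        partialIdeal K (univ.filter fun j : Fin n => j < i) ∅ := by
      simp [Ideal.ofList_take_ofFn, partialIdeal]
    have hi' : (⟨i, hi⟩ : Fin n) ∉ univ.filter fun j : Fin n => j < i := by simp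
    rw [hprefix, List.getElem_ofFn]
    have hcard : #(univ.filter fun j : Fin n => j < i) + #(∅ : Finset (Fin n)) < n := by
      simpa using card_lt_univ_of_notMem hi'
    exact ⟨isPrime_partialIdeal K (disjoint_empty_right _) hcard,
      entry_notMem_partialIdeal K hi' (notMem_empty _)⟩
  · have hle : Ideal.ofList (List.ofFn (entry (n := n) K)) ≤ RingHom.ker constantCoeff := by
      refine Ideal.span_le.mpr fun _ hf => ?_
      obtain ⟨i, rfl⟩ := List.mem_ofFn.mp hf
      simp [entry]
    intro htop
    have h1 := hle (htop ▸ Submodule.mem_top (x := (1 : MvPolynomial (Var n) K)))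
    rw [RingHom.mem_ker, map_one] at h1
    exact one_ne_zero h1
end

section
/- Let $K$ be a field, $X$ the generic skew-symmetric $n \times n$ matrix (entries $x_{ij}$ for $i < j$, $x_{ji} = -x_{ij}$, zero diagonal), $Y$ the generic $n \times 1$ column, and $g_1, \ldots, g_n$ the entries of $XY$. Then $g_1, \ldots, g_{n-1}$ is a regular sequence in the polynomial ring $R = K[x_{ij} (i<j), y_j]$. -/
open MvPolynomial Polynomial

section Abstract
variable {A B : Type*} [CommRing A] [CommRing B]

lemma mapSymmMap {A B : Type*} [CommRing A] [CommRing B] (e : A ≃+* B) (I : Ideal A) :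
    (I.map (e : A →+* B)).map (e.symm : B →+* A) = I := by
  rw [Ideal.map_map]
  have h : ((e.symm : B →+* A).comp (e : A →+* B)) = RingHom.id A := by
    ext x; simp
  rw [h, Ideal.map_id]

/-- `x` is a nonzerodivisor mod `I`. -/
def NdMod (I : Ideal A) (x : A) : Prop := ∀ u, u * x ∈ I → u ∈ I

lemma ndMod_transfer (e : A ≃+* B) {I : Ideal A} {x : A}
    (h : NdMod I x) : NdMod (I.map (e : A →+* B)) (e x) := by
  intro u hu
  have h1 : e.symm u * x ∈ I := by
    have : e.symm (u * e x) ∈ I := by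
      rw [Ideal.symm_apply_mem_of_equiv_iff]; exact hu
    simpa using this
  have h2 := h _ h1
  have h3 : e (e.symm u) ∈ I.map (e : A →+* B) := Ideal.apply_mem_of_equiv_iff.mpr h2
  simpa using h3

lemma ndMod_comap {φ : A →+* B} (hs : Function.Surjective φ) (I : Ideal A) {x : A}
    (h : NdMod (I.map φ) (φ x)) : NdMod (RingHom.ker φ ⊔ I) x := by
  intro u hu
  have h1 : φ u * φ x ∈ I.map φ := by
    have h0 : φ (u * x) ∈ (RingHom.ker φ ⊔ I).map φ := Ideal.mem_map_of_mem _ hu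
    rw [Ideal.map_sup] at h0
    have hker : (RingHom.ker φ).map φ = ⊥ := by
      rw [Ideal.map, Ideal.span_eq_bot]
      rintro y ⟨z, hz, rfl⟩; exact hz
    rw [hker, bot_sup_eq, map_mul] at h0; exact h0
  have h2 : u ∈ Ideal.comap φ (I.map φ) := h _ h1
  rwa [Ideal.comap_map_of_surjective' φ hs, sup_comm] at h2

/-- push a nonzerodivisor statement through `C : A → MvPolynomial κ A`. -/
lemma ndMod_C (κ : Type*) {I : Ideal A} {x : A} (h : NdMod I x) :
    NdMod (I.map (MvPolynomial.C : A →+* MvPolynomial κ A)) (MvPolynomial.C x) := by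
  intro u hu
  rw [MvPolynomial.mem_map_C_iff] at hu ⊢
  intro m
  have := hu m
  rw [mul_comm, MvPolynomial.coeff_C_mul] at this
  exact h _ (by rwa [mul_comm] at this)

lemma ndMod_descend_polyC {I : Ideal A} {x : A}
    (h : NdMod (I.map (Polynomial.C : A →+* A[X])) (Polynomial.C x)) : NdMod I x := by
  intro u hu
  have h0 : (Polynomial.C u : A[X]) * Polynomial.C x ∈ I.map (Polynomial.C : A →+* A[X]) := by
    rw [← map_mul]; exact Ideal.mem_map_of_mem _ hu
  have h1 := h _ h0
  rw [Ideal.mem_map_C_iff] at h1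
  simpa using h1 0

/-- the key "leading coefficient" lemma. -/
lemma ndMod_poly {I : Ideal A} {y : A} (r : A) (h : NdMod I y) :
    NdMod (I.map (Polynomial.C : A →+* A[X]))
      (Polynomial.C y * Polynomial.X + Polynomial.C r) := by
  intro q hq
  rw [Ideal.mem_map_C_iff] at hq ⊢
  have key : ∀ j k, q.natDegree < k + j → q.coeff k ∈ I := by
    intro j
    induction j with
    | zero => intro k hk; rw [Polynomial.coeff_eq_zero_of_natDegree_lt (by omega)]; exact I.zero_mem
    | succ j ih =>
      intro k hk
      have h1 : q.coeff (k+1) ∈ I := ih (k+1) (by omega)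
      have h2 := hq (k+1)
      have hco : (q * (Polynomial.C y * Polynomial.X + Polynomial.C r)).coeff (k+1)
          = q.coeff k * y + q.coeff (k+1) * r := by
        rw [mul_add, Polynomial.coeff_add, ← mul_assoc, Polynomial.coeff_mul_C,
          Polynomial.coeff_mul_X, Polynomial.coeff_mul_C]
      rw [hco] at h2
      have h3 : q.coeff k * y ∈ I := by
        have := I.mul_mem_right r h1
        have := I.sub_mem h2 this
        simpa using this
      exact h _ h3
  intro k
  exact key (q.natDegree + 1) k (by omega)

/-- the swap lemma: if `x` is nzd mod `J` and `f` nzd mod `J ⊔ (x)`,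
then `x` is nzd mod `J ⊔ (f)`. -/
lemma ndMod_swap {J : Ideal A} {x f : A} (hx : NdMod J x)
    (hf : NdMod (J ⊔ Ideal.span {x}) f) : NdMod (J ⊔ Ideal.span {f}) x := by
  intro u hu
  rw [Submodule.mem_sup] at hu
  obtain ⟨j, hj, z, hz, hjz⟩ := hu
  rw [Ideal.mem_span_singleton'] at hz
  obtain ⟨v, rfl⟩ := hz
  have hv : v * f ∈ J ⊔ Ideal.span {x} := by
    have : v * f = u * x - j := by rw [← hjz]; ring
    rw [this]
    exact Submodule.sub_mem _ (Submodule.mem_sup_right (Ideal.mem_span_singleton'.mpr ⟨u, rfl⟩))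
      (Submodule.mem_sup_left hj)
  have hv2 := hf _ hv
  rw [Submodule.mem_sup] at hv2
  obtain ⟨j', hj', z', hz', hjz'⟩ := hv2
  rw [Ideal.mem_span_singleton'] at hz'
  obtain ⟨w, rfl⟩ := hz'
  have hkey : (u - w * f) * x ∈ J := by
    have : (u - w * f) * x = j + j' * f := by
      have h1 : u * x = j + v * f := hjz.symm
      have h2 : v = j' + w * x := hjz'.symm
      rw [sub_mul, h1, h2]; ring
    rw [this]
    exact J.add_mem hj (J.mul_mem_right f hj')
  have := hx _ hkey
  have : u = (u - w * f) + w * f := by ring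
  rw [this]
  exact Submodule.add_mem _ (Submodule.mem_sup_left (hx _ hkey))
    (Submodule.mem_sup_right (Ideal.mem_span_singleton'.mpr ⟨w, rfl⟩))

/-- bubble lemma: if `x` is nzd mod `J` and `(x, l)` is a "regular sequence" over `J`,
then `x` is nzd mod `J ⊔ (l)`. -/
lemma ndMod_bubble (x : A) : ∀ (l : List A) (J : Ideal A), NdMod J x →
    (∀ i (h : i < l.length),
      NdMod (J ⊔ Ideal.span {x} ⊔ Ideal.ofList (l.take i)) l[i]) →
    NdMod (J ⊔ Ideal.ofList l) x := by
  intro l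
  induction l with
  | nil => intro J hx _; simpa using hx
  | cons f t ih =>
    intro J hx h1
    have hswap : NdMod (J ⊔ Ideal.span {f}) x := by
      apply ndMod_swap hx
      have := h1 0 (by simp)
      simpa using this
    have := ih (J ⊔ Ideal.span {f}) hswap ?_
    · rw [Ideal.ofList_cons, ← sup_assoc]; exact this
    · intro i hi
      have := h1 (i+1) (by simpa using hi)
      simp only [List.getElem_cons_succ, List.take_succ_cons, Ideal.ofList_cons] at this ⊢
      have heq : J ⊔ Ideal.span {f} ⊔ Ideal.span {x} ⊔ Ideal.ofList (t.take i)
          = J ⊔ Ideal.span {x} ⊔ (Ideal.span {f} ⊔ Ideal.ofList (t.take i)) := by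
        ac_rfl
      rw [heq]; exact this

end Abstract

section Rename
variable {K : Type*} [CommRing K] {σ' σ : Type*}

lemma ndMod_rename {emb : σ' → σ} (hinj : Function.Injective emb)
    {I : Ideal (MvPolynomial σ' K)} {x : MvPolynomial σ' K} (h : NdMod I x) :
    NdMod (I.map ((rename emb).toRingHom : MvPolynomial σ' K →+* MvPolynomial σ K))
      (rename emb x) := by
  classical
  let κ := {s : σ // ¬ s ∈ Set.range emb}
  let e' : κ ⊕ σ' ≃ σ := (Equiv.sumComm κ σ').trans
    (((Equiv.ofInjective emb hinj).sumCongr (Equiv.refl κ)).trans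
      (Equiv.sumCompl (· ∈ Set.range emb)))
  have he' : ∀ s, e' (Sum.inr s) = emb s := by
    intro s
    simp only [e', Equiv.trans_apply, Equiv.sumComm_apply, Sum.swap_inr, Equiv.sumCongr_apply,
      Sum.map_inl]
    rfl
  let ε : MvPolynomial κ (MvPolynomial σ' K) ≃+* MvPolynomial σ K :=
    ((sumAlgEquiv K κ σ').symm.trans (renameEquiv K e')).toRingEquiv
  let F : MvPolynomial σ' K →ₐ[K] MvPolynomial σ K :=
    ((renameEquiv K e').toAlgHom.comp ((sumAlgEquiv K κ σ').symm.toAlgHom.comp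
      (IsScalarTower.toAlgHom K (MvPolynomial σ' K) (MvPolynomial κ (MvPolynomial σ' K)))))
  have hF : F = rename emb := by
    apply MvPolynomial.algHom_ext
    intro s
    have h0 : (IsScalarTower.toAlgHom K (MvPolynomial σ' K)
        (MvPolynomial κ (MvPolynomial σ' K))) (X s) = MvPolynomial.C (X s) := by
      simp [IsScalarTower.toAlgHom, MvPolynomial.algebraMap_eq]
    have h1 : (sumAlgEquiv K κ σ').symm (MvPolynomial.C (X s)) = X (Sum.inr s) := by
      rw [AlgEquiv.symm_apply_eq]; simp
    simp only [F, AlgHom.comp_apply, h0, h1, AlgEquiv.toAlgHom_eq_coe, AlgHom.coe_coe]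
    simp [he' s]
  have hcomp : (ε : MvPolynomial κ (MvPolynomial σ' K) →+* MvPolynomial σ K).comp
      (MvPolynomial.C : MvPolynomial σ' K →+* MvPolynomial κ (MvPolynomial σ' K))
      = (rename emb).toRingHom := by
    rw [← hF]; rfl
  have h1 := ndMod_C κ h
  have h2 := ndMod_transfer ε h1
  rw [Ideal.map_map, hcomp] at h2
  have h3 : ε (MvPolynomial.C x) = rename emb x := RingHom.congr_fun hcomp x
  rwa [h3] at h2

end Rename

section Split
variable {K : Type*} [CommRing K] {σ : Type*} [DecidableEq σ] (s₀ : σ)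

/-- split off one variable -/
def wEq : σ ≃ Option {s : σ // s ≠ s₀} where
  toFun s := if h : s = s₀ then none else some ⟨s, h⟩
  invFun o := o.elim s₀ Subtype.val
  left_inv s := by by_cases h : s = s₀ <;> simp [h]
  right_inv o := by
    cases o with
    | none => simp
    | some s => simp [s.2]

noncomputable def Esplit : MvPolynomial σ K ≃ₐ[K] Polynomial (MvPolynomial {s : σ // s ≠ s₀} K) :=
  (renameEquiv K (wEq s₀)).trans (optionEquivLeft K _)

/-- as a ring equiv -/
noncomputable def EsplitRE : MvPolynomial σ K ≃+* Polynomial (MvPolynomial {s : σ // s ≠ s₀} K) :=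
  (Esplit (K := K) s₀).toRingEquiv

@[simp] lemma EsplitRE_apply (p : MvPolynomial σ K) :
    EsplitRE (K := K) s₀ p = Esplit (K := K) s₀ p := rfl

@[simp] lemma Esplit_X_self : Esplit (K := K) s₀ (X s₀) = Polynomial.X := by
  simp [Esplit, wEq, renameEquiv_apply, optionEquivLeft_X_none]

@[simp] lemma Esplit_X_ne {s : σ} (h : s ≠ s₀) :
    Esplit (K := K) s₀ (X s) = Polynomial.C (X ⟨s, h⟩) := by
  simp [Esplit, wEq, renameEquiv_apply, h, optionEquivLeft_X_some]

lemma Esplit_adjoin {p : MvPolynomial σ K}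
    (hp : p ∈ Algebra.adjoin K (MvPolynomial.X '' {s | s ≠ s₀})) :
    ∃ q, Esplit (K := K) s₀ p = Polynomial.C q := by
  have h1 : Esplit (K := K) s₀ p ∈
      (Algebra.adjoin K (MvPolynomial.X '' {s | s ≠ s₀})).map (Esplit (K := K) s₀).toAlgHom :=
    Subalgebra.mem_map.mpr ⟨p, hp, rfl⟩
  rw [AlgHom.map_adjoin] at h1
  have h2 : Algebra.adjoin K ((Esplit (K := K) s₀).toAlgHom '' (MvPolynomial.X '' {s | s ≠ s₀}))
      ≤ (Polynomial.CAlgHom (R := K) (A := MvPolynomial {s : σ // s ≠ s₀} K)).range := by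
    apply Algebra.adjoin_le
    rintro y ⟨-, ⟨s, hs, rfl⟩, rfl⟩
    exact ⟨X ⟨s, hs⟩, (Esplit_X_ne s₀ hs).symm⟩
  obtain ⟨q, hq⟩ := h2 h1
  exact ⟨q, hq.symm⟩

/-- kill the variable `s₀` -/
noncomputable def kil : MvPolynomial σ K →+* MvPolynomial {s : σ // s ≠ s₀} K :=
  (Polynomial.evalRingHom 0).comp (EsplitRE (K := K) s₀ : MvPolynomial σ K →+* _)

lemma kil_apply (p : MvPolynomial σ K) :
    kil (K := K) s₀ p = (Esplit (K := K) s₀ p).eval 0 := rfl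

@[simp] lemma kil_X_self : kil (K := K) s₀ (X s₀) = 0 := by
  rw [kil_apply, Esplit_X_self]; simp

@[simp] lemma kil_X_ne {s : σ} (h : s ≠ s₀) : kil (K := K) s₀ (X s) = X ⟨s, h⟩ := by
  rw [kil_apply, Esplit_X_ne s₀ h]; simp

lemma kil_surjective : Function.Surjective (kil (K := K) s₀) := by
  intro b
  exact ⟨(Esplit (K := K) s₀).symm (Polynomial.C b), by
    rw [kil_apply, AlgEquiv.apply_symm_apply]; simp⟩

lemma EsplitRE_symm_X : (EsplitRE (K := K) s₀).symm Polynomial.X = X s₀ := by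
  rw [← Esplit_X_self (K := K) s₀]
  exact (Esplit (K := K) s₀).symm_apply_apply _

@[simp] lemma EsplitRE_toRingHom_apply (p : MvPolynomial σ K) :
    (EsplitRE (K := K) s₀).toRingHom p = Esplit (K := K) s₀ p := rfl

lemma ker_kil : RingHom.ker (kil (K := K) s₀) = Ideal.span {X s₀} := by
  ext p
  rw [RingHom.mem_ker, kil_apply, ← Polynomial.coeff_zero_eq_eval_zero, ← Polynomial.X_dvd_iff,
    ← Ideal.mem_span_singleton]
  constructor
  · intro h
    have h1 : p ∈ Ideal.comap (R := MvPolynomial σ K) (↑(EsplitRE (K := K) s₀))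
        (Ideal.span {Polynomial.X}) := by
      rw [Ideal.mem_comap]; exact h
    rwa [← Ideal.map_symm, Ideal.map_span, Set.image_singleton, EsplitRE_symm_X] at h1
  · intro h
    have h3 := Ideal.mem_map_of_mem
      (↑(EsplitRE (K := K) s₀) : MvPolynomial σ K →+* (MvPolynomial {s : σ // s ≠ s₀} K)[X]) h
    rw [Ideal.map_span, Set.image_singleton] at h3
    simp only [RingHom.coe_coe, EsplitRE_apply, Esplit_X_self] at h3
    exact h3

end Split


section Main
variable (K : Type*) [Field K]

abbrev SV (n : ℕ) : Type := {p : Fin n × Fin n // p.1 < p.2} ⊕ Fin n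

noncomputable def Xe (n : ℕ) (i j : Fin n) : MvPolynomial (SV n) K :=
  if h : i < j then X (Sum.inl ⟨(i, j), h⟩)
  else if h' : j < i then - X (Sum.inl ⟨(j, i), h'⟩) else 0

noncomputable def Gp (n : ℕ) (i : Fin n) : MvPolynomial (SV n) K :=
  ∑ k, Xe K n i k * X (Sum.inr k)

noncomputable def Glist (n : ℕ) : List (MvPolynomial (SV n) K) :=
  List.ofFn (fun i : Fin (n-1) => Gp K n (Fin.castLE (Nat.sub_le n 1) i))

def yvar (m : ℕ) : SV (m+2) := Sum.inr (Fin.last (m+1))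

def vmap (m : ℕ) : SV (m+1) → SV (m+2)
  | Sum.inl p => Sum.inl ⟨(p.val.1.castSucc, p.val.2.castSucc), by
      have := p.2; simpa using this⟩
  | Sum.inr k => Sum.inr k.castSucc

lemma vmap_ne_yv (m : ℕ) (s : SV (m+1)) : vmap m s ≠ yvar m := by
  cases s with
  | inl p => simp [vmap, yvar]
  | inr k =>
    simp only [vmap, yvar, ne_eq, Sum.inr.injEq]
    exact (Fin.castSucc_lt_last k).ne

def embτ (m : ℕ) (s : SV (m+1)) : {s' : SV (m+2) // s' ≠ yvar m} := ⟨vmap m s, vmap_ne_yv m s⟩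

lemma vmap_injective (m : ℕ) : Function.Injective (vmap m) := by
  intro x y h
  cases x with
  | inl p =>
    cases y with
    | inl q =>
      simp only [vmap, Sum.inl.injEq, Subtype.mk.injEq, Prod.mk.injEq] at h
      obtain ⟨h1, h2⟩ := h
      have e1 : p.val.1 = q.val.1 := Fin.castSucc_injective _ h1
      have e2 : p.val.2 = q.val.2 := Fin.castSucc_injective _ h2
      congr 1
      exact Subtype.ext (Prod.ext e1 e2)
    | inr k => simp [vmap] at h
  | inr k =>
    cases y with
    | inl q => simp [vmap] at h
    | inr k' =>
      simp only [vmap, Sum.inr.injEq] at h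
      exact congrArg Sum.inr (Fin.castSucc_injective _ h)

lemma embτ_injective (m : ℕ) : Function.Injective (embτ m) := by
  intro x y h
  exact vmap_injective m (congrArg Subtype.val h)

lemma kil_Xe (m : ℕ) (a b : Fin (m+1)) :
    kil (yvar m) (Xe K (m+2) a.castSucc b.castSucc) = rename (embτ m) (Xe K (m+1) a b) := by
  unfold Xe
  rcases lt_trichotomy a b with h | h | h
  · rw [dif_pos h, dif_pos (by simpa using h)]
    rw [kil_X_ne _ (by simp [yvar]), rename_X]
    rfl
  · subst h
    rw [dif_neg (lt_irrefl _), dif_neg (lt_irrefl _), dif_neg (lt_irrefl _),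
      dif_neg (lt_irrefl _), map_zero, map_zero]
  · rw [dif_neg (by simp; omega), dif_pos (by simpa using h), dif_neg (not_lt.mpr h.le),
      dif_pos h]
    rw [map_neg, map_neg, kil_X_ne _ (by simp [yvar]), rename_X]
    rfl

lemma kil_Gp (m : ℕ) (i : Fin (m+1)) :
    kil (yvar m) (Gp K (m+2) i.castSucc) = rename (embτ m) (Gp K (m+1) i) := by
  unfold Gp
  rw [map_sum, map_sum, Fin.sum_univ_castSucc]
  have hlast : kil (yvar m) (Xe K (m+2) i.castSucc (Fin.last (m+1)) * X (Sum.inr (Fin.last (m+1))))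
      = 0 := by
    rw [map_mul]
    have : kil (yvar m) (X (Sum.inr (Fin.last (m+1))) : MvPolynomial (SV (m+2)) K) = 0 :=
      kil_X_self (yvar m)
    rw [this, mul_zero]
  rw [hlast, add_zero]
  apply Finset.sum_congr rfl
  intro c _
  rw [map_mul, map_mul, kil_Xe,
    kil_X_ne _ (show (Sum.inr c.castSucc : SV (m+2)) ≠ yvar m from vmap_ne_yv m (Sum.inr c)),
    rename_X]
  rfl

end Main

section ChunkA
variable (K : Type*) [Field K]

lemma Gp_mem_adjoin (n : ℕ) (a b : Fin n) (hab : a < b) (i : Fin n) (hia : i ≠ a) (hib : i ≠ b) :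
    Gp K n i ∈ Algebra.adjoin K (MvPolynomial.X '' {s : SV n | s ≠ Sum.inl ⟨(a,b),hab⟩}) := by
  apply Subalgebra.sum_mem
  intro k _
  apply mul_mem
  · unfold Xe
    split_ifs with h1 h2
    · apply Algebra.subset_adjoin
      refine ⟨_, ?_, rfl⟩
      simp only [Set.mem_setOf_eq, ne_eq, Sum.inl.injEq, Subtype.mk.injEq, Prod.mk.injEq]
      rintro ⟨rfl, rfl⟩
      exact hia rfl
    · apply Subalgebra.neg_mem
      apply Algebra.subset_adjoin
      refine ⟨_, ?_, rfl⟩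
      simp only [Set.mem_setOf_eq, ne_eq, Sum.inl.injEq, Subtype.mk.injEq, Prod.mk.injEq]
      rintro ⟨rfl, rfl⟩
      exact hib rfl
    · exact Subalgebra.zero_mem _
  · apply Algebra.subset_adjoin
    exact ⟨_, by simp, rfl⟩

lemma term_mem_adjoin (m : ℕ) (a b : Fin (m+2)) (hab : a < b) (c : Fin (m+2)) (hcb : c ≠ b) :
    Xe K (m+2) a c * MvPolynomial.X (Sum.inr c)
      ∈ Algebra.adjoin K (MvPolynomial.X '' {s : SV (m+2) | s ≠ Sum.inl ⟨(a,b),hab⟩}) := by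
  apply mul_mem
  · unfold Xe
    split_ifs with h1 h2
    · apply Algebra.subset_adjoin
      refine ⟨_, ?_, rfl⟩
      simp only [Set.mem_setOf_eq, ne_eq, Sum.inl.injEq, Subtype.mk.injEq, Prod.mk.injEq]
      rintro ⟨-, rfl⟩
      exact hcb rfl
    · apply Subalgebra.neg_mem
      apply Algebra.subset_adjoin
      refine ⟨_, ?_, rfl⟩
      simp only [Set.mem_setOf_eq, ne_eq, Sum.inl.injEq, Subtype.mk.injEq, Prod.mk.injEq]
      rintro ⟨rfl, rfl⟩
      exact lt_irrefl _ hab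
    · exact Subalgebra.zero_mem _
  · apply Algebra.subset_adjoin
    exact ⟨_, by simp, rfl⟩

lemma Esplit_Gp_last (m : ℕ) (jf : Fin (m+2)) (hjf : jf < Fin.last (m+1))
    (hyne : (Sum.inr (Fin.last (m+1)) : SV (m+2)) ≠ Sum.inl ⟨(jf, Fin.last (m+1)), hjf⟩) :
    ∃ r, Esplit (Sum.inl ⟨(jf, Fin.last (m+1)), hjf⟩) (Gp K (m+2) jf)
      = Polynomial.C (MvPolynomial.X ⟨Sum.inr (Fin.last (m+1)), hyne⟩) * Polynomial.X
        + Polynomial.C r := by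
  set s₀ : SV (m+2) := Sum.inl ⟨(jf, Fin.last (m+1)), hjf⟩ with hs₀
  have hsum : Gp K (m+2) jf
      = (∑ c : Fin (m+1), Xe K (m+2) jf c.castSucc * MvPolynomial.X (Sum.inr c.castSucc))
        + Xe K (m+2) jf (Fin.last (m+1)) * MvPolynomial.X (Sum.inr (Fin.last (m+1))) := by
    unfold Gp
    rw [Fin.sum_univ_castSucc]
  have hrest : (∑ c : Fin (m+1), Xe K (m+2) jf c.castSucc * MvPolynomial.X (Sum.inr c.castSucc))
      ∈ Algebra.adjoin K (MvPolynomial.X '' {s : SV (m+2) | s ≠ s₀}) := by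
    apply Subalgebra.sum_mem
    intro c _
    exact term_mem_adjoin K m jf (Fin.last (m+1)) hjf c.castSucc (Fin.castSucc_lt_last c).ne
  obtain ⟨r, hr⟩ := Esplit_adjoin s₀ hrest
  refine ⟨r, ?_⟩
  have hXe : Xe K (m+2) jf (Fin.last (m+1)) = MvPolynomial.X s₀ := by
    unfold Xe
    rw [dif_pos hjf]
  rw [hsum, map_add, hr, map_mul, hXe, Esplit_X_self, Esplit_X_ne s₀ hyne]
  ring

end ChunkA

section ChunkB
variable (K : Type*) [Field K]

theorem keyReg : ∀ (n : ℕ) (j : ℕ) (hj : j < n - 1),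
    NdMod (Ideal.ofList ((Glist K n).take j))
      (Gp K n (Fin.castLE (Nat.sub_le n 1) ⟨j, hj⟩)) := by
  intro n
  induction n using Nat.strong_induction_on with
  | _ n IH =>
  rcases n with _ | (_ | m)
  · intro j hj; exact absurd hj (by omega)
  · intro j hj; exact absurd hj (by omega)
  intro j hj
  have hj1 : j < m + 1 := hj
  set jn : Fin (m+2) := Fin.castLE (Nat.sub_le (m+2) 1) ⟨j, hj⟩ with hjn_def
  have hjval : (jn : ℕ) = j := rfl
  have hjlt : jn < Fin.last (m+1) := by
    rw [Fin.lt_def]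
    simpa [hjval] using hj1
  set s₀ : SV (m+2) := Sum.inl ⟨(jn, Fin.last (m+1)), hjlt⟩ with hs₀_def
  have hyne : (Sum.inr (Fin.last (m+1)) : SV (m+2)) ≠ s₀ := by simp [hs₀_def]
  set lj := (Glist K (m+2)).take j with hlj_def
  have hlen2 : (Glist K (m+2)).length = m + 1 := by simp [Glist]
  have hljlen : lj.length = j := by
    rw [hlj_def, List.length_take, hlen2]; omega
  have helem : ∀ i (hi : i < j),
      lj[i]'(by omega) = Gp K (m+2) (Fin.castSucc ⟨i, by omega⟩) := by
    intro i hi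
    rw [List.getElem_of_eq hlj_def, List.getElem_take]
    simp only [Glist, List.getElem_ofFn]
    rfl
  -- step 1 : bubble to get that y_last is a nonzerodivisor mod l_j
  have hx : NdMod (⊥ : Ideal (MvPolynomial (SV (m+2)) K))
      (MvPolynomial.X (Sum.inr (Fin.last (m+1)))) := by
    intro u hu
    rw [Ideal.mem_bot] at hu ⊢
    rcases mul_eq_zero.mp hu with h | h
    · exact h
    · exact absurd h (MvPolynomial.X_ne_zero _)
  have h1 : ∀ i (hi : i < lj.length),
      NdMod (⊥ ⊔ Ideal.span {MvPolynomial.X (Sum.inr (Fin.last (m+1)))}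
        ⊔ Ideal.ofList (lj.take i)) (lj[i]'hi) := by
    intro i hi
    have hij : i < j := by omega
    have him : i < m := by omega
    have hmapeq : ((Glist K (m+2)).take i).map (kil (yvar m))
        = ((Glist K (m+1)).take i).map ((rename (embτ m)).toRingHom) := by
      apply List.ext_getElem
      · simp only [List.length_map, List.length_take, Glist, List.length_ofFn]
        omega
      · intro p hp1 hp2
        have hpi : p < i := by
          simp only [List.length_map, List.length_take, Glist, List.length_ofFn] at hp1
          omega
        simp only [List.getElem_map, List.getElem_take, Glist, List.getElem_ofFn]
        exact kil_Gp K m ⟨p, by omega⟩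
    have hIH := IH (m+1) (by omega) i (by omega : i < (m+1) - 1)
    have hren := ndMod_rename (K := K) (embτ_injective m) hIH
    rw [Ideal.map_ofList, ← hmapeq, ← Ideal.map_ofList] at hren
    have helt : kil (yvar m) (lj[i]'hi)
        = rename (embτ m) (Gp K (m+1) (Fin.castLE (Nat.sub_le (m+1) 1) ⟨i, by omega⟩)) := by
      rw [helem i hij]
      exact kil_Gp K m ⟨i, by omega⟩
    rw [← helt] at hren
    have hcom := ndMod_comap (kil_surjective (yvar m)) _ hren
    rw [ker_kil] at hcom
    have htk : lj.take i = (Glist K (m+2)).take i := by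
      rw [hlj_def, List.take_take, min_eq_left (le_of_lt hij)]
    rw [htk, bot_sup_eq]
    exact hcom
  have hYl := ndMod_bubble (MvPolynomial.X (Sum.inr (Fin.last (m+1)))) lj ⊥ hx h1
  rw [bot_sup_eq] at hYl
  -- step 2: transfer along the splitting at s₀
  have h2 := ndMod_transfer (EsplitRE (K := K) s₀) hYl
  rw [show (EsplitRE (K := K) s₀) (MvPolynomial.X (Sum.inr (Fin.last (m+1))))
      = Polynomial.C (MvPolynomial.X ⟨Sum.inr (Fin.last (m+1)), hyne⟩) from by
    rw [EsplitRE_apply, Esplit_X_ne s₀ hyne]] at h2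
  -- step 3: all the elements of l_j avoid the variable s₀
  have hC : ∀ x ∈ lj, ∃ q, Esplit (K := K) s₀ x = Polynomial.C q := by
    intro x hx'
    rw [List.mem_iff_getElem] at hx'
    obtain ⟨p, hp, rfl⟩ := hx'
    have hpj : p < j := by omega
    rw [helem p hpj]
    apply Esplit_adjoin
    apply Gp_mem_adjoin K (m+2) jn (Fin.last (m+1)) hjlt
    · intro hcon
      have := congrArg Fin.val hcon
      simp only [Fin.coe_castSucc, hjval] at this
      omega
    · intro hcon
      have := congrArg Fin.val hcon
      simp only [Fin.coe_castSucc, Fin.val_last] at this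
      omega
  classical
  let pick : MvPolynomial (SV (m+2)) K → MvPolynomial {s : SV (m+2) // s ≠ s₀} K :=
    fun x => if h : ∃ q, Esplit (K := K) s₀ x = Polynomial.C q then h.choose else 0
  let qs : List (MvPolynomial {s : SV (m+2) // s ≠ s₀} K) := lj.map pick
  have hqs : lj.map (⇑(EsplitRE (K := K) s₀ : MvPolynomial (SV (m+2)) K →+* _))
      = qs.map (⇑(Polynomial.C : MvPolynomial {s : SV (m+2) // s ≠ s₀} K →+* _)) := by
    rw [show qs = lj.map pick from rfl, List.map_map]
    apply List.map_congr_left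
    intro x hx'
    have h := hC x hx'
    simp only [Function.comp_apply, pick, dif_pos h, RingHom.coe_coe, EsplitRE_apply]
    exact h.choose_spec
  have hidl : (Ideal.ofList lj).map ((EsplitRE (K := K) s₀ : MvPolynomial (SV (m+2)) K →+* _))
      = (Ideal.ofList qs).map (Polynomial.C : MvPolynomial {s : SV (m+2) // s ≠ s₀} K →+* _) := by
    rw [Ideal.map_ofList, Ideal.map_ofList, hqs]
  rw [hidl] at h2
  -- step 4,5: descend and apply the leading coefficient lemma
  have h4 := ndMod_descend_polyC h2
  obtain ⟨r, hr⟩ := Esplit_Gp_last K m jn hjlt hyne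
  have h5 := ndMod_poly r h4
  rw [← hidl, ← hr] at h5
  -- step 6: transfer back
  have h6 := ndMod_transfer (EsplitRE (K := K) s₀).symm h5
  have hback : (EsplitRE (K := K) s₀).symm (Esplit (K := K) s₀ (Gp K (m+2) jn))
      = Gp K (m+2) jn := by
    exact (EsplitRE (K := K) s₀).symm_apply_apply (Gp K (m+2) jn)
  rw [hback] at h6
  rw [mapSymmMap (EsplitRE (K := K) s₀) (Ideal.ofList lj)] at h6
  exact h6

end ChunkB

section ChunkC

lemma ndMod_isSMulRegular {A : Type*} [CommRing A] {I : Ideal A} {x : A} (h : NdMod I x) :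
    IsSMulRegular (A ⧸ (I • ⊤ : Submodule A A)) x := by
  have hIT : (I • ⊤ : Submodule A A) = I := by simp
  rw [hIT]
  intro a b hab
  obtain ⟨u, rfl⟩ := Submodule.Quotient.mk_surjective _ a
  obtain ⟨v, rfl⟩ := Submodule.Quotient.mk_surjective _ b
  simp only [← Submodule.Quotient.mk_smul] at hab
  rw [Submodule.Quotient.eq] at hab
  have h2 : (u - v) * x ∈ I := by
    have he : x • u - x • v = (u - v) * x := by
      simp only [smul_eq_mul]; ring
    rwa [he] at hab
  have h3 := h _ h2
  exact (Submodule.Quotient.eq _).mpr h3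

/-- For the generic skew-symmetric `n × n` matrix `X` (variables `x_{ij}`
for `i < j`, with `x_{ji} = -x_{ij}` and zero diagonal) and the generic column `Y`, the
first `n - 1` entries `g_1, …, g_{n-1}` of `XY` form a regular sequence in
`K[x_{ij} (i < j), y_j]`. -/
theorem entries_XY_regular_skewSymmetric
    (K : Type*) [Field K] (n : ℕ)
    (Xmat : Matrix (Fin n) (Fin n)
      (MvPolynomial ({p : Fin n × Fin n // p.1 < p.2} ⊕ Fin n) K))
    (hX : ∀ i j, Xmat i j =
      if h : i < j then MvPolynomial.X (Sum.inl ⟨(i, j), h⟩)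
      else if h' : j < i then - MvPolynomial.X (Sum.inl ⟨(j, i), h'⟩)
      else 0)
    (g : Fin n → MvPolynomial ({p : Fin n × Fin n // p.1 < p.2} ⊕ Fin n) K)
    (hg : ∀ i, g i = ∑ k, Xmat i k * MvPolynomial.X (Sum.inr k)) :
    RingTheory.Sequence.IsRegular
      (MvPolynomial ({p : Fin n × Fin n // p.1 < p.2} ⊕ Fin n) K)
      (List.ofFn (fun i : Fin (n - 1) => g (Fin.castLE (Nat.sub_le n 1) i))) := by
  have hlist : (List.ofFn (fun i : Fin (n - 1) => g (Fin.castLE (Nat.sub_le n 1) i)))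
      = Glist K n := by
    unfold Glist
    congr 1
    funext i
    rw [hg]
    unfold Gp
    apply Finset.sum_congr rfl
    intro k _
    rw [hX]
    unfold Xe
    rfl
  rw [hlist]
  constructor
  · constructor
    intro i hilen
    have hi : i < n - 1 := by simpa [Glist] using hilen
    have hElem : (Glist K n)[i]'hilen = Gp K n (Fin.castLE (Nat.sub_le n 1) ⟨i, hi⟩) := by
      simp only [Glist, List.getElem_ofFn]
    rw [hElem]
    exact ndMod_isSMulRegular (keyReg K n i hi)
  · have hIT : (Ideal.ofList (Glist K n) •
        (⊤ : Submodule (MvPolynomial (SV n) K) (MvPolynomial (SV n) K)))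
        = (Ideal.ofList (Glist K n) :
            Submodule (MvPolynomial (SV n) K) (MvPolynomial (SV n) K)) := by simp
    rw [hIT]
    intro htop
    have h1 : (1 : MvPolynomial (SV n) K) ∈ Ideal.ofList (Glist K n) := by
      rw [← htop]; trivial
    have hle : Ideal.ofList (Glist K n)
        ≤ RingHom.ker (constantCoeff : MvPolynomial (SV n) K →+* K) := by
      rw [Ideal.span_le]
      rintro x hx
      simp only [Set.mem_setOf_eq, Glist, List.mem_ofFn] at hx
      obtain ⟨i, rfl⟩ := hx
      rw [SetLike.mem_coe, RingHom.mem_ker]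
      unfold Gp
      rw [map_sum]
      apply Finset.sum_eq_zero
      intro k _
      rw [map_mul, constantCoeff_X, mul_zero]
    have h2 := hle h1
    rw [RingHom.mem_ker, map_one] at h2
    exact one_ne_zero h2

end ChunkC
end

section
/- Let $K$ be a field, $X$ the generic $n \times n$ matrix, $Y$ the generic column, $g_1, \ldots, g_n$ the entries of $XY$. For every $1 \le t \le n-1$, the ideal $\langle g_1, \ldots, g_t \rangle$ is a prime ideal of $R = K[x_{ij}, y_j]$. -/
open MvPolynomial Matrix Finset

set_option maxHeartbeats 1000000
set_option synthInstance.maxHeartbeats 200000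

namespace SpanGAux

variable {n : ℕ}

lemma sum_if_succ {A : Type*} [CommRing A] (f : Fin n → A) {t : ℕ} (ht : t < n) :
    (∑ i : Fin n, if (i : ℕ) < t + 1 then f i else 0)
      = (∑ i : Fin n, if (i : ℕ) < t then f i else 0) + f ⟨t, ht⟩ := by
  have : ∀ i : Fin n, (if (i : ℕ) < t + 1 then f i else 0)
      = (if (i : ℕ) < t then f i else 0) + (if i = ⟨t, ht⟩ then f i else 0) := by
    intro i
    by_cases h1 : (i : ℕ) < t
    · have : i ≠ ⟨t, ht⟩ := by simp [Fin.ext_iff]; omega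
      simp [h1, this, show (i:ℕ) < t + 1 by omega]
    · by_cases h2 : (i : ℕ) = t
      · have : i = ⟨t, ht⟩ := by simp [Fin.ext_iff, h2]
        simp [this, h1]
      · have : i ≠ ⟨t, ht⟩ := by simp [Fin.ext_iff]; omega
        simp [h1, this, show ¬ ((i:ℕ) < t + 1) by omega]
  rw [Finset.sum_congr rfl (fun i _ => this i), Finset.sum_add_distrib]
  congr 1
  simp

lemma antisym_sum {A : Type*} [CommRing A] (a : Fin n → Fin n → A) (T : Fin n → A)
    (hanti : ∀ i j, a i j = - a j i) (hdiag : ∀ i, a i i = 0) :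
    ∑ i : Fin n, ∑ j : Fin n, a i j * T j * T i = 0 := by
  rw [← Finset.sum_product' (univ : Finset (Fin n)) (univ : Finset (Fin n))
    (fun i j => a i j * T j * T i)]
  refine Finset.sum_involution (fun p _ => (p.2, p.1)) ?_ ?_
    (fun _ _ => Finset.mem_product.2 ⟨mem_univ _, mem_univ _⟩) (fun _ _ => rfl)
  · intro p _
    have := hanti p.1 p.2
    rw [this]; ring
  · intro p _ hne h
    have h2 : p.1 = p.2 := by
      have := congrArg Prod.fst h
      simpa using this.symm
    apply hne
    rw [h2, hdiag]; ring

lemma koszul {A : Type*} [CommRing A] (s : Fin n → A) :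
    ∀ (t : ℕ), t ≤ n →
    (∀ j : Fin n, (j : ℕ) < t → ∀ h : A,
        h * s j ∈ Ideal.span (Set.range fun i : Fin n => if (i : ℕ) < (j : ℕ) then s i else 0) →
        h ∈ Ideal.span (Set.range fun i : Fin n => if (i : ℕ) < (j : ℕ) then s i else 0)) →
    ∀ h : Fin n → A, (∑ i : Fin n, if (i : ℕ) < t then s i * h i else 0) = 0 →
    ∃ a : Fin n → Fin n → A, (∀ i j, a i j = - a j i) ∧ (∀ i, a i i = 0) ∧
      ∀ i : Fin n, (i : ℕ) < t → h i = ∑ j : Fin n, if (j : ℕ) < t then a i j * s j else 0 := by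
  intro t
  induction t with
  | zero =>
    intro _ _ h _
    exact ⟨0, by simp, by simp, by simp⟩
  | succ t ih =>
    intro ht hreg h hsum
    have htn : t < n := ht
    rw [sum_if_succ (fun i => s i * h i) htn] at hsum
    have hmem : h ⟨t, htn⟩ * s ⟨t, htn⟩ ∈
        Ideal.span (Set.range fun i : Fin n => if (i : ℕ) < ((⟨t, htn⟩ : Fin n) : ℕ) then s i else 0) := by
      rw [Ideal.mem_span_range_iff_exists_fun]
      refine ⟨fun i => - h i, ?_⟩
      have step : ∀ i : Fin n, (- h i) * (if (i : ℕ) < ((⟨t, htn⟩ : Fin n) : ℕ) then s i else 0)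
          = - (if (i : ℕ) < t then s i * h i else 0) := by
        intro i; show (- h i) * (if (i : ℕ) < t then s i else 0) = _; split <;> ring
      rw [Finset.sum_congr rfl (fun i _ => step i)]
      rw [Finset.sum_neg_distrib]
      linear_combination - hsum
    have hTc := hreg ⟨t, htn⟩ (by simp) (h ⟨t, htn⟩) hmem
    rw [Ideal.mem_span_range_iff_exists_fun] at hTc
    obtain ⟨c, hc⟩ := hTc
    have hsum' : (∑ i : Fin n, if (i : ℕ) < t then s i * (h i + c i * s ⟨t, htn⟩) else 0) = 0 := by
      have expand : ∀ i : Fin n, (if (i : ℕ) < t then s i * (h i + c i * s ⟨t, htn⟩) else 0)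
          = (if (i : ℕ) < t then s i * h i else 0)
            + (c i * (if (i:ℕ) < ((⟨t, htn⟩ : Fin n) : ℕ) then s i else 0)) * s ⟨t, htn⟩ := by
        intro i
        show _ = (if (i : ℕ) < t then s i * h i else 0) + (c i * (if (i:ℕ) < t then s i else 0)) * s ⟨t, htn⟩
        split <;> ring
      rw [Finset.sum_congr rfl (fun i _ => expand i), Finset.sum_add_distrib, ← Finset.sum_mul, hc]
      linear_combination hsum
    obtain ⟨d, hdanti, hddiag, hd⟩ := ih (le_of_lt htn) (fun j hj => hreg j (by omega)) _ hsum'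
    set a : Fin n → Fin n → A := fun i j =>
      if (i : ℕ) < t ∧ (j : ℕ) < t then d i j
      else if (i : ℕ) < t ∧ (j : ℕ) = t then - c i
      else if (i : ℕ) = t ∧ (j : ℕ) < t then c j
      else 0 with ha
    refine ⟨a, ?_, ?_, ?_⟩
    · intro i j
      by_cases hi : (i:ℕ) < t <;> by_cases hj : (j:ℕ) < t <;>
        by_cases hi2 : (i:ℕ) = t <;> by_cases hj2 : (j:ℕ) = t <;>
          first
            | omega
            | simp [ha, hi, hj, hi2, hj2, hdanti i j]
    · intro i
      by_cases hi : (i : ℕ) < t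
      · simp [ha, hi, hddiag]
      · simp [ha, hi]
    · intro i hi
      have e1 : (∑ j : Fin n, if (j : ℕ) < t + 1 then a i j * s j else 0)
          = (∑ j : Fin n, if (j : ℕ) < t then a i j * s j else 0) + a i ⟨t, htn⟩ * s ⟨t, htn⟩ :=
        sum_if_succ (fun j => a i j * s j) htn
      rcases lt_or_eq_of_le (Nat.lt_succ_iff.mp hi) with hi' | hi'
      · have e2 : (∑ j : Fin n, if (j : ℕ) < t then a i j * s j else 0)
            = (∑ j : Fin n, if (j : ℕ) < t then d i j * s j else 0) := by
          refine Finset.sum_congr rfl (fun j _ => ?_)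
          by_cases hj : (j:ℕ) < t
          · simp only [if_pos hj]; congr 1; simp [ha, hi', hj]
          · simp [hj]
        have e3 : a i ⟨t, htn⟩ = - c i := by
          simp [ha, hi']
        rw [e1, e2, e3, ← hd i hi']
        ring
      · have hieq : i = ⟨t, htn⟩ := Fin.ext hi'
        subst hieq
        have e2 : (∑ j : Fin n, if (j : ℕ) < t then a ⟨t, htn⟩ j * s j else 0)
            = (∑ j : Fin n, c j * if (j : ℕ) < ((⟨t, htn⟩ : Fin n) : ℕ) then s j else 0) := by
          refine Finset.sum_congr rfl (fun j _ => ?_)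
          show _ = c j * if (j : ℕ) < t then s j else 0
          by_cases hj : (j:ℕ) < t
          · simp only [if_pos hj]
            have : a ⟨t, htn⟩ j = c j := by simp [ha, hj]
            rw [this]
          · simp [hj]
        have e3 : a ⟨t, htn⟩ ⟨t, htn⟩ = 0 := by simp [ha]
        rw [e1, e2, e3, hc]
        ring

variable (K : Type*) [Field K]

/-- The partial bilinear forms `g_i^{(m)} = ∑_{k<m} x_{ik} y_k`. -/
noncomputable def Gp {n : ℕ} (i : Fin n) (m : ℕ) : MvPolynomial (Fin n × Fin n ⊕ Fin n) K :=
  ∑ k : Fin n, if (k : ℕ) < m then X (Sum.inl (i, k)) * X (Sum.inr k) else 0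

/-- The ideal generated by `g_1^{(m)}, …, g_t^{(m)}`. -/
noncomputable def Ig (n : ℕ) (t m : ℕ) : Ideal (MvPolynomial (Fin n × Fin n ⊕ Fin n) K) :=
  Ideal.span (Set.range fun i : Fin n => if (i : ℕ) < t then Gp K i m else 0)

variable {K}

lemma Gp_succ {m : ℕ} (hm : m < n) (i : Fin n) :
    Gp K i (m + 1) = Gp K i m + X (Sum.inl (i, ⟨m, hm⟩)) * X (Sum.inr ⟨m, hm⟩) :=
  sum_if_succ (fun k => X (Sum.inl (i, k)) * X (Sum.inr k)) hm

/-- Two ring homs that agree on constants and whose values on variables differ by elements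
of an ideal `J` differ by elements of `J` everywhere. -/
lemma diff_mem {σ : Type*} {S : Type*} [CommRing S]
    (ψ χ : MvPolynomial σ K →+* S) (J : Ideal S)
    (hC : ∀ a : K, ψ (C a) = χ (C a))
    (hX : ∀ v, ψ (X v) - χ (X v) ∈ J) :
    ∀ f, ψ f - χ f ∈ J := by
  intro f
  induction f using MvPolynomial.induction_on with
  | C a => rw [hC a]; simp
  | add p q hp hq =>
    rw [map_add, map_add]
    have : ψ p + ψ q - (χ p + χ q) = (ψ p - χ p) + (ψ q - χ q) := by ring
    rw [this]; exact J.add_mem hp hq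
  | mul_X p v hp =>
    rw [_root_.map_mul, _root_.map_mul]
    have : ψ p * ψ (X v) - χ p * χ (X v)
        = ψ p * (ψ (X v) - χ (X v)) + χ (X v) * (ψ p - χ p) := by ring
    rw [this]
    exact J.add_mem (J.mul_mem_left _ (hX v)) (J.mul_mem_left _ hp)

/-- The substitution `y_j ↦ 0`. -/
noncomputable def pim (j : Fin n) :
    MvPolynomial (Fin n × Fin n ⊕ Fin n) K →ₐ[K] MvPolynomial (Fin n × Fin n ⊕ Fin n) K :=
  aeval (fun v => if v = Sum.inr j then 0 else X v)

lemma pim_X_self (j : Fin n) : pim (K := K) j (X (Sum.inr j)) = 0 := by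
  simp [pim]

lemma pim_X_of_ne {j : Fin n} {v : Fin n × Fin n ⊕ Fin n} (hv : v ≠ Sum.inr j) :
    pim (K := K) j (X v) = X v := by
  simp [pim, hv]

lemma pim_Gp {m : ℕ} (hm : m < n) (i : Fin n) :
    pim (K := K) ⟨m, hm⟩ (Gp K i (m + 1)) = Gp K i m := by
  rw [Gp, map_sum, Gp]
  refine Finset.sum_congr rfl (fun k _ => ?_)
  rw [apply_ite (pim (K := K) ⟨m, hm⟩), map_zero, _root_.map_mul]
  by_cases h1 : (k : ℕ) < m
  · have hne : (Sum.inr k : Fin n × Fin n ⊕ Fin n) ≠ Sum.inr ⟨m, hm⟩ := by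
      simp [Fin.ext_iff]; omega
    rw [if_pos (by omega : (k:ℕ) < m + 1), if_pos h1,
      pim_X_of_ne (by simp), pim_X_of_ne hne]
  · by_cases h2 : (k : ℕ) = m
    · have : (Sum.inr k : Fin n × Fin n ⊕ Fin n) = Sum.inr ⟨m, hm⟩ := by
        simp [Fin.ext_iff, h2]
      rw [if_pos (by omega : (k:ℕ) < m + 1), if_neg h1, this, pim_X_self]
      ring
    · rw [if_neg (by omega), if_neg h1]

lemma sub_pim_mem (j : Fin n) (f : MvPolynomial (Fin n × Fin n ⊕ Fin n) K) :
    f - pim (K := K) j f ∈ Ideal.span {(X (Sum.inr j) : MvPolynomial (Fin n × Fin n ⊕ Fin n) K)} := by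
  have := diff_mem (RingHom.id _) (pim (K := K) j).toRingHom
    (Ideal.span {(X (Sum.inr j) : MvPolynomial (Fin n × Fin n ⊕ Fin n) K)})
    (fun a => by simp [pim]) ?_ f
  · simpa using this
  · intro v
    by_cases hv : v = Sum.inr j
    · subst hv
      simp only [RingHom.id_apply, AlgHom.toRingHom_eq_coe, RingHom.coe_coe, pim_X_self, sub_zero]
      exact Ideal.subset_span rfl
    · simp [pim_X_of_ne hv]

lemma Gp_mem {t m : ℕ} {i : Fin n} (hi : (i : ℕ) < t) : Gp K i m ∈ Ig K n t m := by
  exact Ideal.subset_span ⟨i, by simp [hi]⟩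

lemma eval_w_Gp (j : Fin n) {m : ℕ} (hm1 : 1 ≤ m) (i : Fin n) :
    eval (fun v : Fin n × Fin n ⊕ Fin n => match v with
      | Sum.inl (p, q) => if p = j ∧ (q : ℕ) = 0 then (1 : K) else 0
      | Sum.inr k => if (k : ℕ) = 0 then 1 else 0) (Gp K i m)
      = if i = j then 1 else 0 := by
  have npos : 0 < n := j.pos
  rw [Gp, map_sum]
  have step : ∀ k : Fin n,
      eval (fun v : Fin n × Fin n ⊕ Fin n => match v with
        | Sum.inl (p, q) => if p = j ∧ (q : ℕ) = 0 then (1 : K) else 0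
        | Sum.inr k => if (k : ℕ) = 0 then 1 else 0)
        (if (k : ℕ) < m then X (Sum.inl (i, k)) * X (Sum.inr k) else 0)
      = if k = ⟨0, npos⟩ then (if i = j then (1:K) else 0) else 0 := by
    intro k
    rw [apply_ite (eval _), map_zero, _root_.map_mul, eval_X, eval_X]
    by_cases hk0 : (k : ℕ) = 0
    · have hk : k = ⟨0, npos⟩ := by simp [Fin.ext_iff, hk0]
      subst hk
      rw [if_pos (by omega), if_pos rfl]
      by_cases hij : i = j <;> simp [hij]
    · have hk : k ≠ ⟨0, npos⟩ := by simp [Fin.ext_iff, hk0]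
      rw [if_neg hk]
      split
      · simp [hk0]
      · rfl
  rw [Finset.sum_congr rfl (fun k _ => step k)]
  simp

lemma Gp_notMem (j : Fin n) {m : ℕ} (hm1 : 1 ≤ m) :
    Gp K j m ∉ Ig K n (j : ℕ) m := by
  intro hmem
  rw [Ig, Ideal.mem_span_range_iff_exists_fun] at hmem
  obtain ⟨c, hc⟩ := hmem
  have := congrArg (eval (fun v : Fin n × Fin n ⊕ Fin n => match v with
      | Sum.inl (p, q) => if p = j ∧ (q : ℕ) = 0 then (1 : K) else 0
      | Sum.inr k => if (k : ℕ) = 0 then 1 else 0)) hc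
  rw [map_sum, eval_w_Gp j hm1 j, if_pos rfl] at this
  have z : ∀ i : Fin n, eval (fun v : Fin n × Fin n ⊕ Fin n => match v with
      | Sum.inl (p, q) => if p = j ∧ (q : ℕ) = 0 then (1 : K) else 0
      | Sum.inr k => if (k : ℕ) = 0 then 1 else 0)
      (c i * if (i : ℕ) < (j : ℕ) then Gp K i m else 0) = 0 := by
    intro i
    rw [_root_.map_mul]
    rw [apply_ite (eval _), map_zero, eval_w_Gp j hm1 i]
    by_cases hij : (i : ℕ) < (j : ℕ)
    · have : i ≠ j := by simp [Fin.ext_iff]; omega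
      simp [hij, this]
    · simp [hij]
  rw [Finset.sum_congr rfl (fun i _ => z i)] at this
  simp at this

/-- The abstract cancellation computation. -/
lemma nzd_calc {A : Type*} [CommRing A] [IsDomain A] (y f : A) (hy : y ≠ 0)
    (T S xm p c b : Fin n → A) (a : Fin n → Fin n → A)
    (hTS : ∀ j, S j = T j - xm j * y)
    (hanti : ∀ i j, a i j = - a j i) (hdiag : ∀ i, a i i = 0)
    (hc : ∑ i, c i * T i = y * f)
    (hb : ∀ i, c i = p i + y * b i)
    (hrep : ∀ i, p i * T i = (∑ j, a i j * S j) * T i) :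
    f = ∑ i, (b i - ∑ j, a i j * xm j) * T i := by
  apply mul_left_cancel₀ hy
  rw [← hc]
  calc ∑ i, c i * T i
      = ∑ i, (p i * T i + y * (b i * T i)) := by
        refine Finset.sum_congr rfl fun i _ => ?_; rw [hb i]; ring
    _ = ∑ i, (∑ j, a i j * S j) * T i + y * ∑ i, b i * T i := by
        rw [Finset.sum_add_distrib, ← Finset.mul_sum]
        congr 1
        exact Finset.sum_congr rfl fun i _ => hrep i
    _ = ∑ i, ∑ j, (a i j * T j * T i - a i j * xm j * T i * y) + y * ∑ i, b i * T i := by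
        congr 1
        refine Finset.sum_congr rfl fun i _ => ?_
        rw [Finset.sum_mul]
        refine Finset.sum_congr rfl fun j _ => ?_
        rw [hTS j]; ring
    _ = (∑ i, ∑ j, a i j * T j * T i) - (∑ i, ∑ j, a i j * xm j * T i) * y
          + y * ∑ i, b i * T i := by
        congr 1
        rw [Finset.sum_mul, ← Finset.sum_sub_distrib]
        refine Finset.sum_congr rfl fun i _ => ?_
        rw [Finset.sum_mul, ← Finset.sum_sub_distrib]
    _ = - (∑ i, ∑ j, a i j * xm j * T i) * y + y * ∑ i, b i * T i := by
        rw [antisym_sum a T hanti hdiag]; ring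
    _ = y * ∑ i, ((b i - ∑ j, a i j * xm j) * T i) := by
        have e : ∀ i : Fin n, y * ((b i - ∑ j, a i j * xm j) * T i)
            = y * (b i * T i) - (∑ j, a i j * xm j * T i) * y := by
          intro i; rw [← Finset.sum_mul]; ring
        conv_rhs => rw [Finset.mul_sum, Finset.sum_congr rfl fun i _ => e i,
          Finset.sum_sub_distrib]
        linear_combination - Finset.sum_mul univ (fun i : Fin n => ∑ j, a i j * xm j * T i) y
          + Finset.mul_sum univ (fun i : Fin n => b i * T i) y

/-- `y_m` is a nonzerodivisor modulo `Ig t (m+1)`, assuming the smaller ideals are prime. -/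
lemma nzd {m t : ℕ} (hm : m < n) (ht1 : 1 ≤ t) (htm : t ≤ m)
    (hprime : ∀ j : ℕ, j < t → (Ig K n j m).IsPrime)
    (f : MvPolynomial (Fin n × Fin n ⊕ Fin n) K)
    (hf : X (Sum.inr ⟨m, hm⟩) * f ∈ Ig K n t (m + 1)) :
    f ∈ Ig K n t (m + 1) := by
  obtain ⟨c, hc0⟩ := Ideal.mem_span_range_iff_exists_fun.mp hf
  have hc : ∑ i : Fin n, c i * (if (i : ℕ) < t then Gp K i (m + 1) else 0)
      = X (Sum.inr (⟨m, hm⟩ : Fin n)) * f := hc0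
  clear hc0
  -- apply the substitution y_m ↦ 0
  have step : ∀ i : Fin n,
      pim (K := K) ⟨m, hm⟩ (c i * (if (i : ℕ) < t then Gp K i (m + 1) else 0))
        = (if (i : ℕ) < t then Gp K i m * pim (K := K) ⟨m, hm⟩ (c i) else 0) := by
    intro i
    rw [_root_.map_mul, apply_ite (pim (K := K) ⟨m, hm⟩), map_zero]
    by_cases hi : (i : ℕ) < t
    · rw [if_pos hi, if_pos hi, pim_Gp hm i]; ring
    · rw [if_neg hi, if_neg hi]; ring
  have h0 : (∑ i : Fin n, if (i : ℕ) < t then Gp K i m * pim (K := K) ⟨m, hm⟩ (c i) else 0)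
      = 0 := by
    have hπ := congrArg (pim (K := K) ⟨m, hm⟩) hc
    rw [map_sum, _root_.map_mul, pim_X_self, zero_mul] at hπ
    rw [Finset.sum_congr rfl fun i _ => (step i).symm]
    exact hπ
  have hreg : ∀ j : Fin n, (j : ℕ) < t → ∀ h : MvPolynomial (Fin n × Fin n ⊕ Fin n) K,
      h * Gp K j m ∈ Ideal.span (Set.range fun i : Fin n =>
        if (i : ℕ) < (j : ℕ) then Gp K i m else 0) →
      h ∈ Ideal.span (Set.range fun i : Fin n =>
        if (i : ℕ) < (j : ℕ) then Gp K i m else 0) := by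
    intro j hj h hmem
    have hp := hprime (j : ℕ) hj
    rcases hp.mem_or_mem (show h * Gp K j m ∈ Ig K n (j : ℕ) m from hmem) with h1 | h2
    · exact h1
    · exact absurd h2 (Gp_notMem j (by omega))
  obtain ⟨a, hanti, hdiag, hrep⟩ :=
    koszul (fun i : Fin n => Gp K i m) t (by omega) hreg
      (fun i => pim (K := K) ⟨m, hm⟩ (c i)) h0
  choose b hb using fun i : Fin n =>
    Ideal.mem_span_singleton.mp (sub_pim_mem ⟨m, hm⟩ (c i))
  have hfe : f = ∑ i : Fin n,
      ((b i - ∑ j : Fin n, a i j * (if (j : ℕ) < t then X (Sum.inl (j, ⟨m, hm⟩)) else 0))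
        * (if (i : ℕ) < t then Gp K i (m + 1) else 0)) := by
    refine nzd_calc (X (Sum.inr ⟨m, hm⟩)) f (X_ne_zero _)
      (fun i => if (i : ℕ) < t then Gp K i (m + 1) else 0)
      (fun i => if (i : ℕ) < t then Gp K i m else 0)
      (fun j => if (j : ℕ) < t then X (Sum.inl (j, ⟨m, hm⟩)) else 0)
      (fun i => pim (K := K) ⟨m, hm⟩ (c i)) c b a ?_ hanti hdiag hc ?_ ?_
    · intro j
      beta_reduce
      by_cases hj : (j : ℕ) < t
      · rw [if_pos hj, if_pos hj, if_pos hj, Gp_succ hm j]; ring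
      · rw [if_neg hj, if_neg hj, if_neg hj]; ring
    · intro i
      have := hb i
      linear_combination this
    · intro i
      beta_reduce
      by_cases hi : (i : ℕ) < t
      · rw [hrep i hi]
        congr 1
        refine Finset.sum_congr rfl fun j _ => ?_
        by_cases hj : (j : ℕ) < t
        · rw [if_pos hj, if_pos hj]
        · rw [if_neg hj, if_neg hj]; ring
      · rw [if_neg hi]; ring
  rw [hfe]
  exact Ideal.mem_span_range_iff_exists_fun.mpr ⟨_, rfl⟩

variable (K)

/-- The localization of the polynomial ring away from `y_m`. -/
abbrev Lm (n : ℕ) {m : ℕ} (hm : m < n) :=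
  Localization (Submonoid.powers
    (X (Sum.inr (⟨m, hm⟩ : Fin n)) : MvPolynomial (Fin n × Fin n ⊕ Fin n) K))

/-- The elimination substitution `x_{im} ↦ -g_i^{(m)}/y_m` (for `i < t`). -/
noncomputable def phiv (t : ℕ) {m : ℕ} (hm : m < n) :
    (Fin n × Fin n ⊕ Fin n) → Lm K n hm
  | Sum.inl pq =>
      if (pq.1 : ℕ) < t ∧ pq.2 = ⟨m, hm⟩
      then - algebraMap _ _ (Gp K pq.1 m)
        * IsLocalization.Away.invSelf
            (X (Sum.inr ⟨m, hm⟩) : MvPolynomial (Fin n × Fin n ⊕ Fin n) K)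
      else algebraMap _ _ (X (Sum.inl pq) : MvPolynomial (Fin n × Fin n ⊕ Fin n) K)
  | Sum.inr k => algebraMap _ _ (X (Sum.inr k) : MvPolynomial (Fin n × Fin n ⊕ Fin n) K)

/-- The elimination homomorphism. -/
noncomputable def phim (t : ℕ) {m : ℕ} (hm : m < n) :
    MvPolynomial (Fin n × Fin n ⊕ Fin n) K →+* Lm K n hm :=
  eval₂Hom ((algebraMap (MvPolynomial (Fin n × Fin n ⊕ Fin n) K) (Lm K n hm)).comp C)
    (phiv K t hm)

variable {K}

lemma phim_C (t : ℕ) {m : ℕ} (hm : m < n) (a : K) :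
    phim K t hm (C a) = algebraMap _ _ (C a : MvPolynomial (Fin n × Fin n ⊕ Fin n) K) := by
  simp [phim]

lemma phim_X (t : ℕ) {m : ℕ} (hm : m < n) (v) :
    phim K t hm (X v) = phiv K t hm v :=
  eval₂Hom_X' _ _ v

lemma phim_X_of_ne (t : ℕ) {m : ℕ} (hm : m < n) {p q : Fin n}
    (h : ¬ ((p : ℕ) < t ∧ q = ⟨m, hm⟩)) :
    phim K t hm (X (Sum.inl (p, q)))
      = algebraMap _ _ (X (Sum.inl (p, q)) : MvPolynomial (Fin n × Fin n ⊕ Fin n) K) := by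
  rw [phim_X]
  simp only [phiv]
  rw [if_neg h]

lemma phim_X_inr (t : ℕ) {m : ℕ} (hm : m < n) (k : Fin n) :
    phim K t hm (X (Sum.inr k))
      = algebraMap _ _ (X (Sum.inr k) : MvPolynomial (Fin n × Fin n ⊕ Fin n) K) := by
  rw [phim_X]
  simp only [phiv]

lemma phim_X_of_hit (t : ℕ) {m : ℕ} (hm : m < n) {p : Fin n} (hp : (p : ℕ) < t) :
    phim K t hm (X (Sum.inl (p, ⟨m, hm⟩)))
      = - algebraMap _ _ (Gp K p m)
        * IsLocalization.Away.invSelf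
            (X (Sum.inr ⟨m, hm⟩) : MvPolynomial (Fin n × Fin n ⊕ Fin n) K) := by
  rw [phim_X]
  simp only [phiv]
  rw [if_pos ⟨hp, trivial⟩]

lemma phim_Gp (t : ℕ) {m : ℕ} (hm : m < n) (i : Fin n) :
    phim K t hm (Gp K i m) = algebraMap _ _ (Gp K i m) := by
  rw [Gp, map_sum, map_sum]
  refine Finset.sum_congr rfl fun k _ => ?_
  rw [apply_ite (phim K t hm), apply_ite (algebraMap (MvPolynomial (Fin n × Fin n ⊕ Fin n) K)
    (Lm K n hm)), map_zero, map_zero]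
  by_cases hk : (k : ℕ) < m
  · rw [if_pos hk, if_pos hk, _root_.map_mul, _root_.map_mul, phim_X_inr,
      phim_X_of_ne t hm (by rintro ⟨-, hk2⟩; simp [Fin.ext_iff] at hk2; omega)]
  · rw [if_neg hk, if_neg hk]

lemma phim_Gp_succ_eq_zero {t : ℕ} {m : ℕ} (hm : m < n) {i : Fin n} (hi : (i : ℕ) < t) :
    phim K t hm (Gp K i (m + 1)) = 0 := by
  rw [Gp_succ hm i, _root_.map_add, _root_.map_mul, phim_Gp, phim_X_of_hit t hm hi, phim_X_inr]
  have hu := IsLocalization.Away.mul_invSelf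
    (S := Lm K n hm) (X (Sum.inr ⟨m, hm⟩) : MvPolynomial (Fin n × Fin n ⊕ Fin n) K)
  linear_combination (- algebraMap (MvPolynomial (Fin n × Fin n ⊕ Fin n) K) (Lm K n hm)
    (Gp K i m)) * hu

theorem Ig_isPrime : ∀ m t : ℕ, t + 1 ≤ m → m ≤ n → (Ig K n t m).IsPrime := by
  intro m
  induction m with
  | zero => intro t ht _; omega
  | succ m ih =>
    intro t ht hmn
    have hm : m < n := by omega
    rcases Nat.eq_zero_or_pos t with rfl | htpos
    · have hbot : Ig K n 0 (m + 1) = ⊥ := by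
        refine le_antisymm (Ideal.span_le.mpr ?_) bot_le
        rintro x ⟨i, rfl⟩
        simp
      rw [hbot]
      exact Ideal.bot_prime
    · have hle : Submonoid.powers (X (Sum.inr ⟨m, hm⟩) : MvPolynomial (Fin n × Fin n ⊕ Fin n) K)
          ≤ nonZeroDivisors _ :=
        Submonoid.powers_le.mpr (mem_nonZeroDivisors_of_ne_zero (X_ne_zero _))
      haveI : IsDomain (Lm K n hm) := IsLocalization.isDomain_localization hle
      have hker : Ig K n t (m + 1) = RingHom.ker (phim K t hm) := by
        refine le_antisymm ?_ ?_
        · rw [Ig]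
          refine Ideal.span_le.mpr ?_
          rintro x ⟨i, rfl⟩
          rw [SetLike.mem_coe, RingHom.mem_ker]
          by_cases hi : (i : ℕ) < t
          · show phim K t hm (if (i : ℕ) < t then Gp K i (m + 1) else 0) = 0
            rw [if_pos hi]
            exact phim_Gp_succ_eq_zero hm hi
          · show phim K t hm (if (i : ℕ) < t then Gp K i (m + 1) else 0) = 0
            rw [if_neg hi, map_zero]
        · intro f hf
          have hf0 : phim K t hm f = 0 := hf
          have hX : ∀ v, phim K t hm (X v)
                - algebraMap _ (Lm K n hm) (X v : MvPolynomial (Fin n × Fin n ⊕ Fin n) K)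
              ∈ (Ig K n t (m + 1)).map (algebraMap _ (Lm K n hm)) := by
            intro v
            match v with
            | Sum.inr k =>
              rw [phim_X_inr]; simp
            | Sum.inl (p, q) =>
              by_cases hpq : (p : ℕ) < t ∧ q = ⟨m, hm⟩
              · obtain ⟨hp, rfl⟩ := hpq
                have hu := IsLocalization.Away.mul_invSelf
                  (S := Lm K n hm)
                  (X (Sum.inr ⟨m, hm⟩) : MvPolynomial (Fin n × Fin n ⊕ Fin n) K)
                have heq : phim K t hm (X (Sum.inl (p, ⟨m, hm⟩)))
                    - algebraMap _ (Lm K n hm)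
                        (X (Sum.inl (p, ⟨m, hm⟩)) : MvPolynomial (Fin n × Fin n ⊕ Fin n) K)
                    = (- IsLocalization.Away.invSelf
                        (X (Sum.inr ⟨m, hm⟩) : MvPolynomial (Fin n × Fin n ⊕ Fin n) K))
                      * algebraMap _ (Lm K n hm) (Gp K p (m + 1)) := by
                  rw [phim_X_of_hit t hm hp]
                  have hsucc := congrArg (algebraMap (MvPolynomial (Fin n × Fin n ⊕ Fin n) K)
                    (Lm K n hm)) (Gp_succ hm p)
                  rw [_root_.map_add, _root_.map_mul] at hsucc
                  rw [hsucc]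
                  linear_combination (algebraMap (MvPolynomial (Fin n × Fin n ⊕ Fin n) K)
                    (Lm K n hm) (X (Sum.inl (p, ⟨m, hm⟩)))) * hu
                rw [heq]
                exact Ideal.mul_mem_left _ _ (Ideal.mem_map_of_mem _ (Gp_mem hp))
              · rw [phim_X_of_ne t hm hpq]; simp
          have hdiff := diff_mem (phim K t hm)
            (algebraMap (MvPolynomial (Fin n × Fin n ⊕ Fin n) K) (Lm K n hm))
            ((Ig K n t (m + 1)).map (algebraMap _ (Lm K n hm)))
            (fun a => phim_C t hm a) hX f
          rw [hf0, zero_sub] at hdiff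
          have hmem := (Ideal.neg_mem_iff _).mp hdiff
          rw [IsLocalization.mem_map_algebraMap_iff
            (Submonoid.powers (X (Sum.inr ⟨m, hm⟩) : MvPolynomial (Fin n × Fin n ⊕ Fin n) K))
            (Lm K n hm)] at hmem
          obtain ⟨⟨r, s⟩, heq2⟩ := hmem
          obtain ⟨N, hN⟩ := s.2
          rw [← _root_.map_mul] at heq2
          have heq3 : f * (s : MvPolynomial (Fin n × Fin n ⊕ Fin n) K) = r :=
            IsLocalization.injective (Lm K n hm) hle heq2
          have hpow : ∀ (N : ℕ) (f : MvPolynomial (Fin n × Fin n ⊕ Fin n) K),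
              (X (Sum.inr ⟨m, hm⟩)) ^ N * f ∈ Ig K n t (m + 1) → f ∈ Ig K n t (m + 1) := by
            intro N
            induction N with
            | zero => intro f h; simpa using h
            | succ N ihN =>
              intro f h
              have h' : (X (Sum.inr ⟨m, hm⟩)) ^ N * ((X (Sum.inr ⟨m, hm⟩)) * f)
                  ∈ Ig K n t (m + 1) := by
                rw [← mul_assoc, ← pow_succ]; exact h
              exact nzd hm htpos (by omega)
                (fun j hj => ih j (by omega) (by omega)) f (ihN _ h')
          apply hpow N
          have hrew : (X (Sum.inr ⟨m, hm⟩) : MvPolynomial (Fin n × Fin n ⊕ Fin n) K) ^ N * f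
              = f * s := by rw [← hN]; ring
          rw [hrew, heq3]
          exact r.2
      rw [hker]
      exact RingHom.ker_isPrime _

end SpanGAux

/-- For the generic `n × n` matrix `X` and generic column `Y`, for every
`1 ≤ t ≤ n - 1`, the ideal `⟨g_1, …, g_t⟩` is prime in `K[x_{ij}, y_j]`. -/
theorem span_g_isPrime_generic
    (K : Type*) [Field K] (n : ℕ)
    (g : Fin n → MvPolynomial (Fin n × Fin n ⊕ Fin n) K)
    (hg : ∀ i, g i = ∑ k, MvPolynomial.X (Sum.inl (i, k)) * MvPolynomial.X (Sum.inr k)) :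
    ∀ t : ℕ, 1 ≤ t → t ≤ n - 1 →
      (Ideal.span {p | ∃ i : Fin n, (i : ℕ) < t ∧ p = g i}).IsPrime := by
  intro t ht1 htn
  have hg' : ∀ i : Fin n, g i = SpanGAux.Gp K i n := by
    intro i
    rw [hg i, SpanGAux.Gp]
    exact Finset.sum_congr rfl fun k _ => (if_pos k.isLt).symm
  have hspan : Ideal.span {p | ∃ i : Fin n, (i : ℕ) < t ∧ p = g i} = SpanGAux.Ig K n t n := by
    apply le_antisymm
    · refine Ideal.span_le.mpr ?_
      rintro p ⟨i, hi, rfl⟩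
      rw [hg' i]
      exact SpanGAux.Gp_mem hi
    · rw [SpanGAux.Ig]
      refine Ideal.span_le.mpr ?_
      rintro x ⟨i, rfl⟩
      show (if (i : ℕ) < t then SpanGAux.Gp K i n else 0) ∈ _
      by_cases hi : (i : ℕ) < t
      · rw [if_pos hi]
        exact Ideal.subset_span ⟨i, hi, (hg' i).symm⟩
      · rw [if_neg hi]
        exact Ideal.zero_mem _
  rw [hspan]
  exact SpanGAux.Ig_isPrime n t (by omega) le_rfl
end

section
/- Let $K$ be a field, $m < n$, $X$ the generic $m \times n$ matrix, and $Y$ the generic $n \times 1$ column. Then $I_1(XY) = \langle g_1, \ldots, g_m \rangle$ is a prime ideal of $R = K[x_{ij}, y_j]$. -/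
set_option linter.unusedSectionVars false
set_option linter.unusedVariables false
set_option maxHeartbeats 1000000
set_option synthInstance.maxHeartbeats 400000

open MvPolynomial Finset

namespace I1XYAux

/-- Abstract lemma: over a comm ring `S`, if `a` is a nonzerodivisor mod the ideal `N`,
then multiplication by `C a * X + C b` is "injective" mod `N.map C`. -/
theorem lin_aux {S : Type*} [CommRing S] (N : Ideal S) (a b : S)
    (ha : ∀ x, a * x ∈ N → x ∈ N) (P : Polynomial S)
    (hP : P * (Polynomial.C a * Polynomial.X + Polynomial.C b) ∈ N.map Polynomial.C) :
    P ∈ N.map Polynomial.C := by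
  rw [Ideal.mem_map_C_iff] at hP ⊢
  have key : ∀ k i : ℕ, P.natDegree < i + k → P.coeff i ∈ N := by
    intro k
    induction k with
    | zero =>
      intro i hi
      rw [Polynomial.coeff_eq_zero_of_natDegree_lt (by omega)]
      exact N.zero_mem
    | succ k ih =>
      intro i hi
      have h1 : P.coeff (i + 1) ∈ N := ih (i + 1) (by omega)
      have h2 : (P * (Polynomial.C a * Polynomial.X + Polynomial.C b)).coeff (i+1)
          = a * P.coeff i + b * P.coeff (i + 1) := by
        rw [mul_add, Polynomial.coeff_add]
        rw [show P * (Polynomial.C a * Polynomial.X) = Polynomial.C a * (P * Polynomial.X) by ring]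
        rw [Polynomial.coeff_C_mul, Polynomial.coeff_mul_X]
        rw [show P * Polynomial.C b = Polynomial.C b * P by ring, Polynomial.coeff_C_mul]
      have h3 : a * P.coeff i ∈ N := by
        have := hP (i+1)
        rw [h2] at this
        have := N.sub_mem this (N.mul_mem_left b h1)
        simpa using this
      exact ha _ h3
  intro i
  exact key (P.natDegree + 1) i (by omega)

open MvPolynomial Finset



variable {K : Type*} [Field K] {σ : Type*} [DecidableEq σ]

/-- The variable-splitting equivalence isolating the variable `v`. -/
noncomputable def optE (v : σ) :
    MvPolynomial σ K ≃ₐ[K] Polynomial (MvPolynomial {s : σ // s ≠ v} K) :=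
  (renameEquiv K (Equiv.optionSubtypeNe v).symm).trans (optionEquivLeft K _)

theorem optE_X_ne (v : σ) {s : σ} (h : s ≠ v) :
    optE v (X s : MvPolynomial σ K) = Polynomial.C (X ⟨s, h⟩) := by
  simp [optE, Equiv.optionSubtypeNe_symm_of_ne h, optionEquivLeft_X_some]

theorem optE_X_self (v : σ) :
    optE v (X v : MvPolynomial σ K) = Polynomial.X := by
  simp [optE, Equiv.optionSubtypeNe_symm_self, optionEquivLeft_X_none]

/-- The subalgebra of polynomials "not involving" the variable `v`. -/
noncomputable def Adj (K : Type*) [Field K] (v : σ) : Subalgebra K (MvPolynomial σ K) :=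
  Algebra.adjoin K (X '' {s | s ≠ v})

theorem X_mem_Adj {v s : σ} (h : s ≠ v) : (X s : MvPolynomial σ K) ∈ Adj K v :=
  Algebra.subset_adjoin ⟨s, h, rfl⟩

theorem exists_C_of_mem_Adj {v : σ} {p : MvPolynomial σ K} (hp : p ∈ Adj K v) :
    ∃ p', optE v p = Polynomial.C p' := by
  induction hp using Algebra.adjoin_induction with
  | mem x hx =>
    obtain ⟨s, hs, rfl⟩ := hx
    exact ⟨X ⟨s, hs⟩, optE_X_ne v hs⟩
  | algebraMap r =>
    refine ⟨algebraMap K _ r, ?_⟩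
    rw [show (algebraMap K (MvPolynomial σ K)) r = C r from rfl] at *
    rw [← MvPolynomial.algebraMap_eq, AlgEquiv.commutes, Polynomial.algebraMap_apply]
  | add x y hx hy ihx ihy =>
    obtain ⟨x', hx'⟩ := ihx; obtain ⟨y', hy'⟩ := ihy
    exact ⟨x' + y', by simp [map_add, hx', hy']⟩
  | mul x y hx hy ihx ihy =>
    obtain ⟨x', hx'⟩ := ihx; obtain ⟨y', hy'⟩ := ihy
    exact ⟨x' * y', by simp [map_mul, hx', hy']⟩

theorem eval₂Hom_eq_on_Adj {A : Type*} [CommRing A] (v : σ) (φ₀ : K →+* A) (Φ : σ → A)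
    (χ : MvPolynomial σ K →+* A) (hC : ∀ a, χ (C a) = φ₀ a)
    (hX : ∀ s, s ≠ v → Φ s = χ (X s)) {p : MvPolynomial σ K} (hp : p ∈ Adj K v) :
    eval₂Hom φ₀ Φ p = χ p := by
  induction hp using Algebra.adjoin_induction with
  | mem x hx =>
    obtain ⟨s, hs, rfl⟩ := hx
    simp [hX s hs]
  | algebraMap r =>
    simp only [MvPolynomial.algebraMap_eq]
    simp [hC]
  | add x y hx hy ihx ihy => simp [map_add, ihx, ihy]
  | mul x y hx hy ihx ihy => simp [map_mul, ihx, ihy]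

theorem sub_aeval_mem (S : Set σ) [DecidablePred (· ∈ S)] (f : MvPolynomial σ K) :
    f - aeval (fun s => if s ∈ S then 0 else X s) f ∈ Ideal.span (X '' S) := by
  induction f using MvPolynomial.induction_on with
  | C a => simp
  | add p q hp hq =>
    have := Ideal.add_mem _ hp hq
    convert this using 1
    rw [map_add]; ring
  | mul_X p s hp =>
    rw [map_mul, aeval_X]
    by_cases hs : s ∈ S
    · rw [if_pos hs]
      have hXs : (X s : MvPolynomial σ K) ∈ Ideal.span (X '' S) :=
        Ideal.subset_span ⟨s, hs, rfl⟩
      have : p * X s - aeval (fun s => if s ∈ S then 0 else X s) p * 0 = p * X s := by ring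
      rw [this]
      exact Ideal.mul_mem_left _ p hXs
    · rw [if_neg hs]
      have : p * X s - aeval (fun s => if s ∈ S then 0 else X s) p * X s
          = (p - aeval (fun s => if s ∈ S then 0 else X s) p) * X s := by ring
      rw [this]
      exact Ideal.mul_mem_right _ _ hp









variable (K : Type*) [Field K] (m n : ℕ)


noncomputable def gg (i : Fin m) : MvPolynomial (Fin m × Fin n ⊕ Fin n) K :=
  ∑ k, X (Sum.inl (i, k)) * X (Sum.inr k)

noncomputable def Ig (j : ℕ) : Ideal (MvPolynomial (Fin m × Fin n ⊕ Fin n) K) :=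
  Ideal.span (gg K m n '' {i : Fin m | (i : ℕ) < j})

noncomputable def Jy (t : ℕ) : Ideal (MvPolynomial (Fin m × Fin n ⊕ Fin n) K) :=
  Ideal.span (X '' (Sum.inr '' {k : Fin n | (k : ℕ) < t}))

noncomputable def cpart (jf : Fin m) (k0 : Fin n) : MvPolynomial (Fin m × Fin n ⊕ Fin n) K :=
  ∑ k ∈ univ.erase k0, X (Sum.inl (jf, k)) * X (Sum.inr k)

theorem gg_split (jf : Fin m) (k0 : Fin n) :
    gg K m n jf = X (Sum.inl (jf, k0)) * X (Sum.inr k0) + cpart K m n jf k0 :=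
  (Finset.add_sum_erase univ _ (mem_univ k0)).symm

theorem cpart_mem_Adj (jf : Fin m) (k0 : Fin n) :
    cpart K m n jf k0 ∈ Adj K (Sum.inl (jf, k0)) := by
  refine Subalgebra.sum_mem _ fun k hk => ?_
  have hk' : k ≠ k0 := by simpa using (Finset.mem_erase.mp hk).1
  exact mul_mem (X_mem_Adj (by simp [Prod.ext_iff, hk'])) (X_mem_Adj (by simp))

theorem gg_mem_Adj {jf i : Fin m} (hij : i ≠ jf) (k0 : Fin n) :
    gg K m n i ∈ Adj K (Sum.inl (jf, k0)) := by
  refine Subalgebra.sum_mem _ fun k _ => ?_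
  exact mul_mem (X_mem_Adj (by simp [Prod.ext_iff, hij])) (X_mem_Adj (by simp))

theorem Jy_zero : Jy K m n 0 = ⊥ := by
  have : {k : Fin n | (k : ℕ) < 0} = ∅ := by ext k; simp
  simp [Jy, this]

theorem Ig_zero : Ig K m n 0 = ⊥ := by
  have : {i : Fin m | (i : ℕ) < 0} = ∅ := by ext i; simp
  simp [Ig, this]

theorem Ig_mono {j j' : ℕ} (h : j ≤ j') : Ig K m n j ≤ Ig K m n j' :=
  Ideal.span_mono (Set.image_mono fun i hi => lt_of_lt_of_le hi h)

theorem Jy_mono {t t' : ℕ} (h : t ≤ t') : Jy K m n t ≤ Jy K m n t' :=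
  Ideal.span_mono (Set.image_mono (Set.image_mono fun k hk => lt_of_lt_of_le hk h))

theorem gg_mem_Ig {j : ℕ} {i : Fin m} (h : (i : ℕ) < j) : gg K m n i ∈ Ig K m n j :=
  Ideal.subset_span ⟨i, h, rfl⟩

theorem X_mem_Jy {t : ℕ} {k : Fin n} (h : (k : ℕ) < t) :
    (X (Sum.inr k) : MvPolynomial (Fin m × Fin n ⊕ Fin n) K) ∈ Jy K m n t :=
  Ideal.subset_span ⟨Sum.inr k, ⟨k, h, rfl⟩, rfl⟩

theorem Ig_succ {j : ℕ} (hj : j < m) :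
    Ig K m n (j + 1) = Ig K m n j ⊔ Ideal.span {gg K m n ⟨j, hj⟩} := by
  have hset : {i : Fin m | (i : ℕ) < j + 1} = {i : Fin m | (i : ℕ) < j} ∪ {⟨j, hj⟩} := by
    ext i
    simp only [Set.mem_setOf_eq, Set.mem_union, Set.mem_singleton_iff]
    constructor
    · intro h
      rcases Nat.lt_succ_iff_lt_or_eq.mp h with h | h
      · exact Or.inl h
      · exact Or.inr (Fin.ext h)
    · rintro (h | rfl)
      · exact Nat.lt_succ_of_lt h
      · exact Nat.lt_succ_self j
  rw [Ig, hset, Set.image_union, Set.image_singleton, Ideal.span_union, Ig]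

theorem Jy_succ {t : ℕ} (ht : t < n) :
    Jy K m n (t + 1) = Jy K m n t ⊔ Ideal.span {X (Sum.inr (⟨t, ht⟩ : Fin n))} := by
  have hset : {k : Fin n | (k : ℕ) < t + 1} = {k : Fin n | (k : ℕ) < t} ∪ {⟨t, ht⟩} := by
    ext k
    simp only [Set.mem_setOf_eq, Set.mem_union, Set.mem_singleton_iff]
    constructor
    · intro h
      rcases Nat.lt_succ_iff_lt_or_eq.mp h with h | h
      · exact Or.inl h
      · exact Or.inr (Fin.ext h)
    · rintro (h | rfl)
      · exact Nat.lt_succ_of_lt h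
      · exact Nat.lt_succ_self t
  rw [Jy, hset, Set.image_union, Set.image_singleton, Set.image_union, Set.image_singleton,
    Ideal.span_union, Jy]

theorem div_aux (jf : Fin m) (k0 : Fin n) (f : MvPolynomial (Fin m × Fin n ⊕ Fin n) K) :
    ∃ (N : ℕ) (q r : MvPolynomial (Fin m × Fin n ⊕ Fin n) K),
      X (Sum.inr k0) ^ N * f = q * gg K m n jf + r ∧ r ∈ Adj K (Sum.inl (jf, k0)) := by
  induction f using MvPolynomial.induction_on with
  | C a =>
    refine ⟨0, 0, C a, by ring, ?_⟩
    rw [← MvPolynomial.algebraMap_eq]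
    exact Subalgebra.algebraMap_mem _ a
  | add p q hp hq =>
    obtain ⟨N1, q1, r1, he1, hr1⟩ := hp
    obtain ⟨N2, q2, r2, he2, hr2⟩ := hq
    refine ⟨N1 + N2, X (Sum.inr k0) ^ N2 * q1 + X (Sum.inr k0) ^ N1 * q2,
      X (Sum.inr k0) ^ N2 * r1 + X (Sum.inr k0) ^ N1 * r2, ?_, ?_⟩
    · rw [pow_add]
      calc X (Sum.inr k0) ^ N1 * X (Sum.inr k0) ^ N2 * (p + q)
          = X (Sum.inr k0) ^ N2 * (X (Sum.inr k0) ^ N1 * p)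
            + X (Sum.inr k0) ^ N1 * (X (Sum.inr k0) ^ N2 * q) := by ring
        _ = _ := by rw [he1, he2]; ring
    · have hx : (X (Sum.inr k0) : MvPolynomial (Fin m × Fin n ⊕ Fin n) K)
          ∈ Adj K (Sum.inl (jf, k0)) := X_mem_Adj (by simp)
      exact add_mem (mul_mem (pow_mem hx N2) hr1) (mul_mem (pow_mem hx N1) hr2)
  | mul_X p s hp =>
    obtain ⟨N, q, r, he, hr⟩ := hp
    by_cases hs : s = Sum.inl (jf, k0)
    · subst hs
      refine ⟨N + 1, q * (gg K m n jf - cpart K m n jf k0) + r, -(r * cpart K m n jf k0), ?_, ?_⟩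
      · have hsplit : X (Sum.inl (jf, k0)) * X (Sum.inr k0)
            = gg K m n jf - cpart K m n jf k0 := by
          rw [gg_split K m n jf k0]; ring
        calc X (Sum.inr k0) ^ (N + 1) * (p * X (Sum.inl (jf, k0)))
            = (X (Sum.inr k0) ^ N * p) * (X (Sum.inl (jf, k0)) * X (Sum.inr k0)) := by ring
          _ = (q * gg K m n jf + r) * (gg K m n jf - cpart K m n jf k0) := by
              rw [he, hsplit]
          _ = (q * (gg K m n jf - cpart K m n jf k0) + r) * gg K m n jf
              + -(r * cpart K m n jf k0) := by ring
      · exact neg_mem (mul_mem hr (cpart_mem_Adj K m n jf k0))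
    · refine ⟨N, q * X s, r * X s, ?_, mul_mem hr (X_mem_Adj hs)⟩
      calc X (Sum.inr k0) ^ N * (p * X s) = (X (Sum.inr k0) ^ N * p) * X s := by ring
        _ = _ := by rw [he]; ring



theorem main (hmn : m < n) : ∀ j, j ≤ m →
    (Ig K m n j).IsPrime ∧
    (∀ t : Fin n, (t : ℕ) < n - j →
      ∀ f, X (Sum.inr t) * f ∈ Ig K m n j ⊔ Jy K m n t →
        f ∈ Ig K m n j ⊔ Jy K m n t) := by
  intro j
  induction j with
  | zero =>
    intro _
    refine ⟨by rw [Ig_zero]; exact Ideal.bot_prime, ?_⟩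
    intro t ht f hf
    rw [Ig_zero, bot_sup_eq] at hf ⊢
    classical
    set S : Set (Fin m × Fin n ⊕ Fin n) := Sum.inr '' {k : Fin n | (k : ℕ) < (t : ℕ)} with hS
    have hJS : Jy K m n (t : ℕ) = Ideal.span (X '' S) := rfl
    set ev : MvPolynomial (Fin m × Fin n ⊕ Fin n) K →ₐ[K] MvPolynomial (Fin m × Fin n ⊕ Fin n) K :=
      aeval (fun s => if s ∈ S then 0 else X s) with hev
    have hker' : ∀ z ∈ Jy K m n (t : ℕ), ev z = 0 := by
      intro z hz
      rw [hJS] at hz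
      refine Submodule.span_induction ?_ ?_ ?_ ?_ hz
      · rintro _ ⟨s, hs, rfl⟩
        rw [hev, aeval_X, if_pos hs]
      · exact map_zero _
      · intro x y _ _ hx hy
        rw [map_add, hx, hy, add_zero]
      · intro r x _ hx
        rw [smul_eq_mul, map_mul, hx, mul_zero]
    have hnt : (Sum.inr t : Fin m × Fin n ⊕ Fin n) ∉ S := by
      rintro ⟨k, hk, hke⟩
      have hkt : k = t := by simpa using hke
      subst hkt
      exact absurd (show (k : ℕ) < (k : ℕ) from hk) (lt_irrefl _)
    have h0 : ev (X (Sum.inr t)) * ev f = 0 := by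
      have := hker' _ hf
      rwa [map_mul] at this
    rw [show ev (X (Sum.inr t)) = X (Sum.inr t) from by rw [hev, aeval_X, if_neg hnt]] at h0
    have hevf : ev f = 0 := by
      rcases mul_eq_zero.mp h0 with h | h
      · exact absurd h (X_ne_zero _)
      · exact h
    have hsub : f - ev f ∈ Ideal.span (X '' S) := sub_aeval_mem (K := K) S f
    rw [hevf, sub_zero] at hsub
    rw [hJS]
    exact hsub
  | succ j ih =>
    intro hj1
    have hj : j < m := hj1
    obtain ⟨hprime, hreg⟩ := ih (le_of_lt hj)
    set jf : Fin m := ⟨j, hj⟩ with hjf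
    -- Part (b) for j+1
    have hb : ∀ t : Fin n, (t : ℕ) < n - (j + 1) →
        ∀ f, X (Sum.inr t) * f ∈ Ig K m n (j + 1) ⊔ Jy K m n t →
          f ∈ Ig K m n (j + 1) ⊔ Jy K m n t := by
      intro t ht f hf
      have htn : (t : ℕ) + 1 < n := by omega
      have ht1 : (t : ℕ) + 1 < n - j := by omega
      set t1 : Fin n := ⟨(t : ℕ) + 1, htn⟩ with ht1def
      set v : Fin m × Fin n ⊕ Fin n := Sum.inl (jf, t1) with hv
      set E := optE (K := K) v with hE
      set M1 := Ig K m n j ⊔ Jy K m n ((t : ℕ) + 1) with hM1def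
      set G : Set (MvPolynomial (Fin m × Fin n ⊕ Fin n) K) :=
        gg K m n '' {i : Fin m | (i : ℕ) < j}
          ∪ X '' (Sum.inr '' {k : Fin n | (k : ℕ) < (t : ℕ) + 1}) with hG
      have hM1span : M1 = Ideal.span G := by
        rw [hM1def, hG, Ideal.span_union]; rfl
      have hGadj : ∀ γ ∈ G, γ ∈ Adj K v := by
        rintro γ (⟨i, hi, rfl⟩ | ⟨_, ⟨k, hk, rfl⟩, rfl⟩)
        · refine gg_mem_Adj K m n ?_ t1
          intro hh
          rw [hh] at hi
          exact Nat.lt_irrefl j hi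
        · exact X_mem_Adj (by simp [hv])
      set h0 : MvPolynomial (Fin m × Fin n ⊕ Fin n) K →
          MvPolynomial {s : Fin m × Fin n ⊕ Fin n // s ≠ v} K :=
        fun p => (E p).coeff 0 with hh0
      have hconst : ∀ γ ∈ G, E γ = Polynomial.C (h0 γ) := by
        intro γ hγ
        obtain ⟨p', hp'⟩ := exists_C_of_mem_Adj (hGadj γ hγ)
        have hp'' : E γ = Polynomial.C p' := hp'
        have : h0 γ = p' := by
          show (E γ).coeff 0 = p'
          rw [hp'']
          simp
        rw [this]
        exact hp''
      set N := Ideal.span (h0 '' G) with hN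
      have hmapE : Ideal.map E.toRingEquiv M1 = Ideal.map Polynomial.C N := by
        rw [hM1span, Ideal.map_span, hN, Ideal.map_span]
        congr 1
        calc (E.toRingEquiv : _ → _) '' G = (fun γ => Polynomial.C (h0 γ)) '' G := by
              refine Set.image_congr ?_
              intro γ hγ
              simpa using hconst γ hγ
          _ = Polynomial.C '' (h0 '' G) := by rw [Set.image_image]
      have hmem : ∀ p, p ∈ M1 ↔ E p ∈ Ideal.map Polynomial.C N := by
        intro p
        rw [← hmapE]
        exact (Ideal.apply_mem_of_equiv_iff (f := E.toRingEquiv) (I := M1) (x := p)).symm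
      obtain ⟨a, haC0⟩ := exists_C_of_mem_Adj
        (X_mem_Adj (K := K) (v := v) (s := Sum.inr t1) (by simp [hv]))
      have haC : E (X (Sum.inr t1) : MvPolynomial (Fin m × Fin n ⊕ Fin n) K)
          = Polynomial.C a := haC0
      obtain ⟨bb, hbC0⟩ := exists_C_of_mem_Adj
        (show cpart K m n jf t1 ∈ Adj K v from cpart_mem_Adj K m n jf t1)
      have hbC : E (cpart K m n jf t1) = Polynomial.C bb := hbC0
      have hXv : E (X (Sum.inl (jf, t1)) : MvPolynomial (Fin m × Fin n ⊕ Fin n) K)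
          = Polynomial.X := optE_X_self v
      have hEg : E (gg K m n jf) = Polynomial.C a * Polynomial.X + Polynomial.C bb := by
        rw [gg_split K m n jf t1, map_add, map_mul, hXv, haC, hbC]
        ring
      have ha : ∀ x, a * x ∈ N → x ∈ N := by
        intro x hx
        have h1 : X (Sum.inr t1) * E.symm (Polynomial.C x) ∈ M1 := by
          rw [hmem, map_mul, haC, AlgEquiv.apply_symm_apply, ← Polynomial.C_mul]
          exact Ideal.mem_map_of_mem _ hx
        have h2 := hreg t1 ht1 _ h1
        have h3 : (Polynomial.C x :
            Polynomial (MvPolynomial {s : Fin m × Fin n ⊕ Fin n // s ≠ v} K))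
            ∈ Ideal.map Polynomial.C N := by
          have := (hmem (E.symm (Polynomial.C x))).mp h2
          rwa [AlgEquiv.apply_symm_apply] at this
        have := Ideal.mem_map_C_iff.mp h3 0
        simpa using this
      -- process hf
      rw [Ig_succ K m n hj, sup_right_comm] at hf
      obtain ⟨w, hw, z, hz, heq⟩ := Submodule.mem_sup.mp hf
      obtain ⟨α, hα⟩ := Ideal.mem_span_singleton'.mp hz
      have hwM1 : w ∈ M1 := by
        rw [hM1def]
        exact sup_le_sup_left (Jy_mono K m n (Nat.le_succ _)) _ hw
      have hXtM1 : (X (Sum.inr t) : MvPolynomial (Fin m × Fin n ⊕ Fin n) K) ∈ M1 := by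
        rw [hM1def]
        exact Ideal.mem_sup_right (X_mem_Jy K m n (Nat.lt_succ_self _))
      have hαg : α * gg K m n jf ∈ M1 := by
        have h4 : α * gg K m n jf = X (Sum.inr t) * f - w := by
          rw [hα, ← heq]; ring
        rw [h4]
        exact sub_mem (Ideal.mul_mem_right f _ hXtM1) hwM1
      have hlin := lin_aux N a bb ha (E α) ?_
      swap
      · have := (hmem _).mp hαg
        rwa [map_mul, hEg] at this
      have hαM1 : α ∈ M1 := (hmem α).mpr hlin
      have hM1' : M1 = (Ig K m n j ⊔ Jy K m n (t : ℕ)) ⊔ Ideal.span {X (Sum.inr t)} := by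
        rw [hM1def, Jy_succ K m n t.isLt, Fin.eta, sup_assoc]
      rw [hM1'] at hαM1
      obtain ⟨β, hβ, z2, hz2, heq2⟩ := Submodule.mem_sup.mp hαM1
      obtain ⟨δ, hδ⟩ := Ideal.mem_span_singleton'.mp hz2
      have hkey : X (Sum.inr t) * (f - δ * gg K m n jf) ∈ Ig K m n j ⊔ Jy K m n (t : ℕ) := by
        have hid : X (Sum.inr t) * (f - δ * gg K m n jf) = w + β * gg K m n jf := by
          have e1 : X (Sum.inr t) * f = w + α * gg K m n jf := by rw [hα, heq]
          have e2 : α = β + δ * X (Sum.inr t) := by rw [hδ, heq2]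
          calc X (Sum.inr t) * (f - δ * gg K m n jf)
              = X (Sum.inr t) * f - δ * X (Sum.inr t) * gg K m n jf := by ring
            _ = w + α * gg K m n jf - δ * X (Sum.inr t) * gg K m n jf := by rw [e1]
            _ = w + β * gg K m n jf := by rw [e2]; ring
        rw [hid]
        exact add_mem hw (Ideal.mul_mem_right _ _ hβ)
      have hfin := hreg t (by omega) _ hkey
      have h5 : f - δ * gg K m n jf ∈ Ig K m n (j + 1) ⊔ Jy K m n (t : ℕ) :=
        sup_le_sup_right (Ig_mono K m n (Nat.le_succ _)) _ hfin
      have h6 : δ * gg K m n jf ∈ Ig K m n (j + 1) :=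
        Ideal.mul_mem_left _ δ (gg_mem_Ig K m n (Nat.lt_succ_self j))
      have h7 := add_mem h5 (Ideal.mem_sup_left h6 :
        δ * gg K m n jf ∈ Ig K m n (j + 1) ⊔ Jy K m n (t : ℕ))
      simpa using h7
    -- Part (a)
    haveI hP : (Ig K m n j).IsPrime := hprime
    have hn0 : 0 < n := by omega
    set k0 : Fin n := ⟨0, hn0⟩ with hk0
    set v0 : Fin m × Fin n ⊕ Fin n := Sum.inl (jf, k0) with hv0
    set χ : MvPolynomial (Fin m × Fin n ⊕ Fin n) K →+*
        FractionRing (MvPolynomial (Fin m × Fin n ⊕ Fin n) K ⧸ Ig K m n j) :=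
      (algebraMap _ _).comp (Ideal.Quotient.mk (Ig K m n j)) with hχ
    have hχzero : ∀ p, p ∈ Ig K m n j → χ p = 0 := by
      intro p hp
      rw [hχ]
      simp only [RingHom.comp_apply]
      rw [Ideal.Quotient.eq_zero_iff_mem.mpr hp, map_zero]
    have hχinj : ∀ p, χ p = 0 → p ∈ Ig K m n j := by
      intro p hp
      rw [hχ] at hp
      simp only [RingHom.comp_apply] at hp
      rw [show (0 : FractionRing (MvPolynomial (Fin m × Fin n ⊕ Fin n) K ⧸ Ig K m n j))
          = algebraMap _ _ (0 : MvPolynomial (Fin m × Fin n ⊕ Fin n) K ⧸ Ig K m n j)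
          from (map_zero _).symm] at hp
      have := IsFractionRing.injective
        (MvPolynomial (Fin m × Fin n ⊕ Fin n) K ⧸ Ig K m n j)
        (FractionRing (MvPolynomial (Fin m × Fin n ⊕ Fin n) K ⧸ Ig K m n j)) hp
      rwa [← Ideal.Quotient.eq_zero_iff_mem]
    have hY0 : χ (X (Sum.inr k0)) ≠ 0 := by
      intro h
      have h1 := hχinj _ h
      have h2 : X (Sum.inr k0) * 1 ∈ Ig K m n j ⊔ Jy K m n ((k0 : ℕ)) := by
        rw [mul_one]
        exact Ideal.mem_sup_left h1
      have h3 := hreg k0 (show ((k0 : ℕ)) < n - j by show 0 < n - j; omega) 1 h2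
      have h3' : (1 : MvPolynomial (Fin m × Fin n ⊕ Fin n) K)
          ∈ Ig K m n j ⊔ Jy K m n 0 := h3
      rw [Jy_zero, sup_bot_eq] at h3'
      exact hprime.ne_top ((Ideal.eq_top_iff_one _).mpr h3')
    set Φ : Fin m × Fin n ⊕ Fin n →
        FractionRing (MvPolynomial (Fin m × Fin n ⊕ Fin n) K ⧸ Ig K m n j) :=
      fun s => if s = v0 then -χ (cpart K m n jf k0) / χ (X (Sum.inr k0)) else χ (X s) with hΦ
    set ψ : MvPolynomial (Fin m × Fin n ⊕ Fin n) K →+*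
        FractionRing (MvPolynomial (Fin m × Fin n ⊕ Fin n) K ⧸ Ig K m n j) :=
      eval₂Hom (χ.comp MvPolynomial.C) Φ with hψ
    have hψAdj : ∀ p ∈ Adj K v0, ψ p = χ p := by
      intro p hp
      exact eval₂Hom_eq_on_Adj v0 _ Φ χ (fun a => rfl) (fun s hs => if_neg hs) hp
    have hψX : ∀ s, s ≠ v0 → ψ (X s) = χ (X s) := by
      intro s hs
      rw [hψ, eval₂Hom_X']
      exact if_neg hs
    have hψg : ∀ i : Fin m, (i : ℕ) < j + 1 → ψ (gg K m n i) = 0 := by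
      intro i hi
      rcases Nat.lt_succ_iff_lt_or_eq.mp hi with hi' | hi'
      · have hne : i ≠ jf := by
          intro hh
          rw [hh] at hi'
          exact Nat.lt_irrefl j hi'
        rw [hψAdj _ (gg_mem_Adj K m n hne k0)]
        exact hχzero _ (gg_mem_Ig K m n hi')
      · have hieq : i = jf := Fin.ext hi'
        have e1 : ψ (X (Sum.inl (jf, k0)) : MvPolynomial (Fin m × Fin n ⊕ Fin n) K)
            = -χ (cpart K m n jf k0) / χ (X (Sum.inr k0)) := by
          rw [hψ, eval₂Hom_X']
          show Φ v0 = _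
          rw [hΦ]
          simp
        have e2 : ψ (X (Sum.inr k0) : MvPolynomial (Fin m × Fin n ⊕ Fin n) K)
            = χ (X (Sum.inr k0)) := hψX _ (by simp [hv0])
        have e3 : ψ (cpart K m n jf k0) = χ (cpart K m n jf k0) :=
          hψAdj _ (show _ ∈ Adj K v0 from cpart_mem_Adj K m n jf k0)
        rw [hieq, gg_split K m n jf k0, map_add, map_mul, e1, e2, e3, div_mul_cancel₀ _ hY0]
        ring
    have hker : ∀ p ∈ Ig K m n (j + 1), ψ p = 0 := by
      intro p hp
      have hle : Ideal.span (gg K m n '' {i : Fin m | (i : ℕ) < j + 1}) ≤ RingHom.ker ψ := by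
        refine Ideal.span_le.mpr ?_
        rintro _ ⟨i, hi, rfl⟩
        rw [SetLike.mem_coe, RingHom.mem_ker]
        exact hψg i hi
      have := hle hp
      rwa [RingHom.mem_ker] at this
    have hNZD : ∀ (N : ℕ) (f : MvPolynomial (Fin m × Fin n ⊕ Fin n) K),
        X (Sum.inr k0) ^ N * f ∈ Ig K m n (j + 1) → f ∈ Ig K m n (j + 1) := by
      intro N
      induction N with
      | zero => intro f hf; simpa using hf
      | succ N ihN =>
        intro f hf
        have h1 : X (Sum.inr k0) ^ N * (X (Sum.inr k0) * f) ∈ Ig K m n (j + 1) := by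
          have heq : X (Sum.inr k0) ^ N * (X (Sum.inr k0) * f)
              = X (Sum.inr k0) ^ (N + 1) * f := by ring
          rw [heq]; exact hf
        have h2 := ihN _ h1
        have h3 : X (Sum.inr k0) * f ∈ Ig K m n (j + 1) ⊔ Jy K m n ((k0 : ℕ)) :=
          Ideal.mem_sup_left h2
        have h4 := hb k0 (show ((k0 : ℕ)) < n - (j + 1) by show 0 < n - (j+1); omega) f h3
        have h4' : f ∈ Ig K m n (j + 1) ⊔ Jy K m n 0 := h4
        rwa [Jy_zero, sup_bot_eq] at h4'
    have hKL : ∀ f : MvPolynomial (Fin m × Fin n ⊕ Fin n) K,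
        ψ f = 0 → f ∈ Ig K m n (j + 1) := by
      intro f hf
      obtain ⟨N, q, r, heq, hr⟩ := div_aux K m n jf k0 f
      have h1 : ψ r = 0 := by
        have hc := congrArg ψ heq
        rw [map_mul, map_pow, map_add, map_mul, hf, mul_zero,
          hψg jf (Nat.lt_succ_self j), mul_zero, zero_add] at hc
        exact hc.symm
      have h2 : r ∈ Ig K m n j := by
        rw [hψAdj r hr] at h1
        exact hχinj _ h1
      have h3 : X (Sum.inr k0) ^ N * f ∈ Ig K m n (j + 1) := by
        rw [heq]
        exact add_mem
          (Ideal.mul_mem_left _ _ (gg_mem_Ig K m n (Nat.lt_succ_self j)))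
          (Ig_mono K m n (Nat.le_succ j) h2)
      exact hNZD N f h3
    refine ⟨⟨?_, ?_⟩, hb⟩
    · intro htop
      have h1 : (1 : MvPolynomial (Fin m × Fin n ⊕ Fin n) K) ∈ Ig K m n (j + 1) := by
        rw [htop]; trivial
      have h2 := hker 1 h1
      rw [map_one] at h2
      exact one_ne_zero h2
    · intro p q hpq
      have h2 := hker _ hpq
      rw [map_mul] at h2
      rcases mul_eq_zero.mp h2 with h | h
      · exact Or.inl (hKL p h)
      · exact Or.inr (hKL q h)

end I1XYAux

open MvPolynomial Matrix Finset

/-- For the generic `m × n` matrix `X` with `m < n`, the ideal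
`I₁(XY) = ⟨g_1, …, g_m⟩` is prime in `K[x_{ij}, y_j]`. -/
theorem I1XY_isPrime_of_lt
    (K : Type*) [Field K] (m n : ℕ) (hmn : m < n)
    (g : Fin m → MvPolynomial (Fin m × Fin n ⊕ Fin n) K)
    (hg : ∀ i, g i = ∑ k, MvPolynomial.X (Sum.inl (i, k)) * MvPolynomial.X (Sum.inr k)) :
    (Ideal.span (Set.range g)).IsPrime := by
  have hgg : g = I1XYAux.gg K m n := funext fun i => hg i
  have hrange : Set.range g = I1XYAux.gg K m n '' {i : Fin m | (i : ℕ) < m} := by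
    rw [hgg, show {i : Fin m | (i : ℕ) < m} = Set.univ from by ext i; simp [i.isLt],
      Set.image_univ]
  have hmain := (I1XYAux.main K m n hmn m le_rfl).1
  have hIg : Ideal.span (Set.range g) = I1XYAux.Ig K m n m := by
    rw [hrange]; rfl
  rw [hIg]
  exact hmain
end

section
/- Let $K$ be a field, $X$ the generic symmetric $n \times n$ matrix, and $g_1, \ldots, g_n$ the entries of $XY$ with $Y$ the generic column. For every $1 \le t \le n-1$, the ideal $\langle g_1, \ldots, g_t \rangle$ is prime in $R = K[x_{ij} (i \le j), y_j]$. -/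
open MvPolynomial Matrix Finset

/-!
Write `h^m_i = ∑_{k<m} x_{ik} y_k`, so that `h^{m+1}_i = h^m_i + x_{im} y_m` and, for `i < t ≤ m`,
neither `y_m` nor the `x_{im}` occur in `h^m_0, …, h^m_{t-1}`. After inverting `y_m`, the
substitution `x_{im} ↦ -h^m_i / y_m` exhibits `(h^{m+1}_i)_{i<t}` as the kernel of a map to a
domain, as soon as `y_m` is a nonzerodivisor modulo that ideal; this holds when all syzygies of
the `h^m_i` are Koszul. In turn the Koszul property for `m + 1` and `t + 1` rows follows from
that for `t` rows, since `h^{m+1}_t` is not in the prime ideal `(h^{m+1}_i)_{i<t}`. Induction on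
`m` and `t` thus proves both properties together.
-/

section Koszul

variable {ι A : Type*} [CommRing A]

theorem Ideal.mem_span_image_finset_iff {f : ι → A} {s : Finset ι} {p : A} :
    p ∈ Ideal.span (f '' s) ↔ ∃ a : ι → A, ∑ i ∈ s, a i * f i = p :=
  Submodule.mem_span_image_finset_iff_exists_fun' A

/-- The coefficient matrix `c` is alternating, not merely antisymmetric, so that
`∑ c i j * f j * f i = 0` also in characteristic `2`. -/
def HasOnlyKoszulSyzygies (f : ι → A) (s : Finset ι) : Prop :=
  ∀ a : ι → A, ∑ i ∈ s, a i * f i = 0 →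
    ∃ c : ι → ι → A, (∀ i j, c j i = -c i j) ∧ (∀ i, c i i = 0) ∧
      ∀ i ∈ s, a i = ∑ j ∈ s, c i j * f j

theorem sum_sum_alternating_mul_eq_zero (c : ι → ι → A) (hc : ∀ i j, c j i = -c i j)
    (hc₀ : ∀ i, c i i = 0) (f : ι → A) (s : Finset ι) :
    ∑ i ∈ s, ∑ j ∈ s, c i j * f j * f i = 0 := by
  rw [← Finset.sum_product']
  refine Finset.sum_involution (fun p _ => p.swap) (fun p _ => ?_) (fun p _ hp => ?_)
    (fun p hp => Finset.mem_product.2 (Finset.mem_product.1 hp).symm) (fun p _ => p.swap_swap)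
  · rw [Prod.fst_swap, Prod.snd_swap, hc]
    ring
  · rintro h
    rw [← Prod.ext_iff.1 h |>.1, Prod.fst_swap, hc₀, zero_mul, zero_mul] at hp
    exact hp rfl

theorem hasOnlyKoszulSyzygies_empty (f : ι → A) : HasOnlyKoszulSyzygies f ∅ :=
  fun _ _ => ⟨0, fun _ _ => by simp, fun _ => rfl, by simp⟩

theorem HasOnlyKoszulSyzygies.insert [DecidableEq ι] {f : ι → A} {s : Finset ι} {j : ι}
    (hK : HasOnlyKoszulSyzygies f s) (hj : j ∉ s)
    (hreg : ∀ p, f j * p ∈ Ideal.span (f '' s) → p ∈ Ideal.span (f '' s)) :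
    HasOnlyKoszulSyzygies f (insert j s) := by
  intro a ha
  rw [Finset.sum_insert hj] at ha
  have hmem : f j * a j ∈ Ideal.span (f '' s) :=
    Ideal.mem_span_image_finset_iff.2 ⟨-a, by rw [mul_comm, eq_neg_of_add_eq_zero_left ha]; simp⟩
  obtain ⟨d, hd⟩ := Ideal.mem_span_image_finset_iff.1 (hreg _ hmem)
  obtain ⟨c, hc, hc₀, hac⟩ := hK (fun i => a i + d i * f j) <| by
    simp only [add_mul, Finset.sum_add_distrib, mul_right_comm _ (f j), ← Finset.sum_mul, hd]
    linear_combination ha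
  refine ⟨fun i k => if i = j then (if k = j then 0 else d k)
    else if k = j then -d i else c i k, fun i k => ?_, fun i => ?_, fun i hi => ?_⟩
  · beta_reduce
    split_ifs <;> first | exact hc i k | (subst_vars; simp)
  · beta_reduce
    split_ifs <;> simp [hc₀]
  · have hs : ∀ i', ∑ k ∈ s, (if i' = j then (if k = j then 0 else d k)
        else if k = j then -d i' else c i' k) * f k
        = if i' = j then ∑ k ∈ s, d k * f k else ∑ k ∈ s, c i' k * f k := by
      intro i'
      split_ifs <;>
        exact Finset.sum_congr rfl fun k hk => by rw [if_neg (ne_of_mem_of_not_mem hk hj)]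
    rw [Finset.sum_insert hj, hs]
    by_cases hij : i = j
    · simp [hij, hd]
    · simp only [if_neg hij, ite_true,
        ← hac i (Finset.mem_of_mem_insert_of_ne hi hij)]
      ring

/-- Applying `φ` to `∑ a i * (f i + z i * u) = u * p` gives a syzygy of the `f i`; rewriting
`φ (a i)` by its Koszul coefficients shows that `u * p` is `u` times a combination of the
`f i + z i * u`. -/
theorem HasOnlyKoszulSyzygies.mem_of_mul_mem_span_add_mul {f z : ι → A} {s : Finset ι} {u : A}
    (hK : HasOnlyKoszulSyzygies f s) (hu : IsLeftRegular u) (φ : A →+* A) (hφu : φ u = 0)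
    (hφ : ∀ p, p - φ p ∈ Ideal.span {u}) (hφf : ∀ i ∈ s, φ (f i) = f i) {p : A}
    (hp : u * p ∈ Ideal.span ((fun i => f i + z i * u) '' s)) :
    p ∈ Ideal.span ((fun i => f i + z i * u) '' s) := by
  set g := fun i => f i + z i * u
  obtain ⟨a, ha⟩ := Ideal.mem_span_image_finset_iff.1 hp
  obtain ⟨c, hc, hc₀, hac⟩ := hK (fun i => φ (a i)) <| by
    have := congrArg φ ha
    simp only [map_sum, map_mul, hφu, mul_zero, zero_mul, g, map_add, add_zero] at this
    rw [← this]
    exact Finset.sum_congr rfl fun i hi => by rw [hφf i hi]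
  choose b hb using fun i => Ideal.mem_span_singleton'.1 (hφ (a i))
  refine Ideal.mem_span_image_finset_iff.2 ⟨fun i => b i - ∑ j ∈ s, c i j * z j, hu ?_⟩
  have ha' : ∀ i ∈ s, a i = ∑ j ∈ s, c i j * g j + u * (b i - ∑ j ∈ s, c i j * z j) := by
    intro i hi
    have hg : ∑ j ∈ s, c i j * g j = ∑ j ∈ s, c i j * f j + (∑ j ∈ s, c i j * z j) * u := by
      simp only [g, mul_add, Finset.sum_add_distrib, ← mul_assoc, Finset.sum_mul]
    rw [hg, ← hac i hi]
    linear_combination -hb i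
  calc u * ∑ i ∈ s, (b i - ∑ j ∈ s, c i j * z j) * g i
      = ∑ i ∈ s, ∑ j ∈ s, c i j * g j * g i + u * ∑ i ∈ s, (b i - ∑ j ∈ s, c i j * z j) * g i := by
        rw [sum_sum_alternating_mul_eq_zero c hc hc₀, zero_add]
    _ = ∑ i ∈ s, a i * g i := by
        rw [Finset.mul_sum, ← Finset.sum_add_distrib]
        refine Finset.sum_congr rfl fun i hi => ?_
        rw [ha' i hi, ← Finset.sum_mul]
        ring
    _ = u * p := ha

end Koszul

namespace MvPolynomial

variable {σ R S : Type*} [CommRing R] [CommRing S] [Algebra R S]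

theorem aeval_sub_aeval_mem_span (v w : σ → S) (p : MvPolynomial σ R) :
    aeval v p - aeval w p ∈ Ideal.span (Set.range fun i => v i - w i) := by
  induction p using MvPolynomial.induction_on with
  | C a => simp
  | add p q hp hq =>
    rw [map_add, map_add, add_sub_add_comm]
    exact Ideal.add_mem _ hp hq
  | mul_X p i hp =>
    simp only [map_mul, aeval_X]
    rw [show aeval v p * v i - aeval w p * w i
        = aeval v p * (v i - w i) + (aeval v p - aeval w p) * w i by ring]
    exact Ideal.add_mem _ (Ideal.mul_mem_left _ _ (Ideal.subset_span ⟨i, rfl⟩))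
      (Ideal.mul_mem_right _ _ hp)

theorem aeval_eq_aeval_of_mem_supported {V : Set σ} {p : MvPolynomial σ R}
    (hp : p ∈ supported R V) {v w : σ → S} (hvw : ∀ i ∈ V, v i = w i) :
    aeval v p = aeval w p :=
  eval₂Hom_congr' rfl (fun i hi _ => hvw i (mem_supported.1 hp hi)) rfl

end MvPolynomial

theorem IsLocalization.Away.mem_of_algebraMap_mem_map {A : Type*} [CommRing A] {u : A}
    {I : Ideal A} (hI : ∀ p, u * p ∈ I → p ∈ I) {p : A}
    (hp : algebraMap A (Localization.Away u) p ∈ I.map (algebraMap A (Localization.Away u))) :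
    p ∈ I := by
  obtain ⟨_, ⟨N, rfl⟩, hN⟩ := (IsLocalization.algebraMap_mem_map_algebraMap_iff
    (Submonoid.powers u) (S := Localization.Away u) I p).1 hp
  dsimp only at hN
  induction N with
  | zero => simpa using hN
  | succ N ih => exact ih (hI _ (by rwa [pow_succ', mul_assoc] at hN))

section PolynomialDeformation

variable {σ ι R : Type*} [CommRing R] [IsDomain R] {f : ι → MvPolynomial σ R} {s : Finset ι}
  {V : Set σ} {y : σ}

theorem HasOnlyKoszulSyzygies.mem_of_X_mul_mem_span (hK : HasOnlyKoszulSyzygies f s)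
    (hfV : ∀ i ∈ s, f i ∈ supported R V) (hy : y ∉ V) (z : ι → MvPolynomial σ R)
    {p : MvPolynomial σ R} (hp : X y * p ∈ Ideal.span ((fun i => f i + z i * X y) '' s)) :
    p ∈ Ideal.span ((fun i => f i + z i * X y) '' s) := by
  classical
  let φ := (aeval (R := R) (Function.update (X : σ → MvPolynomial σ R) y 0)).toRingHom
  refine hK.mem_of_mul_mem_span_add_mul (mul_right_injective₀ (X_ne_zero y)) φ
    (by simp [φ]) (fun q => ?_) (fun i hi => ?_) hp
  · have hq := aeval_sub_aeval_mem_span X (Function.update (X : σ → MvPolynomial σ R) y 0) q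
    rw [aeval_X_left_apply] at hq
    refine Ideal.span_le.2 ?_ hq
    rintro _ ⟨a, rfl⟩
    by_cases ha : a = y
    · subst ha
      simp
    · simp [Function.update_of_ne ha]
  · change aeval _ (f i) = f i
    rw [aeval_eq_aeval_of_mem_supported (hfV i hi) (w := X)
      (fun a ha => Function.update_of_ne (ne_of_mem_of_not_mem ha hy) _ _), aeval_X_left_apply]

theorem HasOnlyKoszulSyzygies.isPrime_span_add_X_mul_X (hK : HasOnlyKoszulSyzygies f s)
    (hfV : ∀ i ∈ s, f i ∈ supported R V) (hy : y ∉ V) {z : ι → σ} (hzV : ∀ i ∈ s, z i ∉ V)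
    (hz : Set.InjOn z s) (hzy : ∀ i ∈ s, z i ≠ y) :
    (Ideal.span ((fun i => f i + X (z i) * X y) '' s)).IsPrime := by
  classical
  set I := Ideal.span ((fun i => f i + X (z i) * X y) '' s)
  set u : MvPolynomial σ R := X y
  let B := Localization.Away u
  let ι' := algebraMap (MvPolynomial σ R) B
  have : IsDomain B := IsLocalization.isDomain_of_le_nonZeroDivisors _
    (powers_le_nonZeroDivisors_of_noZeroDivisors (X_ne_zero (R := R) y))
  set v : B := IsLocalization.Away.invSelf u
  have huv : ι' u * v = 1 := IsLocalization.Away.mul_invSelf u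
  -- `ev` substitutes `z i ↦ -f i / y`, killing the generators of `I`; conversely its kernel lies
  -- in `I` by Taylor expansion and the regularity of `y` modulo `I`.
  let w : σ → B := fun a => if h : ∃ i ∈ s, z i = a then -(ι' (f h.choose) * v) else ι' (X a)
  have hwz : ∀ i ∈ s, w (z i) = -(ι' (f i) * v) := by
    intro i hi
    have h : ∃ j ∈ s, z j = z i := ⟨i, hi, rfl⟩
    simp only [w, dif_pos h, hz h.choose_spec.1 hi h.choose_spec.2]
  have hw : ∀ a, (∀ i ∈ s, z i ≠ a) → w a = ι' (X a) := fun a ha =>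
    dif_neg fun ⟨i, hi, h⟩ => ha i hi h
  let ev := aeval (R := R) w
  have hι' : ∀ p, aeval (fun a => ι' (X a)) p = ι' p := fun p =>
    (DFunLike.congr_fun (aeval_unique (IsScalarTower.toAlgHom R (MvPolynomial σ R) B)) p).symm
  have hevf : ∀ j ∈ s, ev (f j) = ι' (f j) := fun j hj => by
    rw [← hι' (f j)]
    exact aeval_eq_aeval_of_mem_supported (hfV j hj)
      (fun a ha => hw a fun i hi h => hzV i hi (h ▸ ha))
  have hker : I = RingHom.ker ev := by
    refine le_antisymm (Ideal.span_le.2 ?_) fun p hp => ?_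
    · rintro _ ⟨i, hi, rfl⟩
      simp only [SetLike.mem_coe, RingHom.mem_ker, map_add, map_mul, aeval_X, ev, hevf i hi,
        hwz i hi, hw y hzy]
      linear_combination (-ι' (f i)) * huv
    · refine IsLocalization.Away.mem_of_algebraMap_mem_map
        (fun q hq => hK.mem_of_X_mul_mem_span hfV hy (fun i => X (z i)) hq) ?_
      have hp' := aeval_sub_aeval_mem_span (fun a => ι' (X a)) w p
      rw [hι', show aeval w p = 0 from hp, sub_zero] at hp'
      refine Ideal.span_le.2 ?_ hp'
      rintro _ ⟨a, rfl⟩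
      dsimp only
      by_cases ha : ∃ i ∈ s, z i = a
      · obtain ⟨i, hi, rfl⟩ := ha
        rw [hwz i hi, sub_neg_eq_add,
          show ι' (X (z i)) + ι' (f i) * v = ι' (f i + X (z i) * X y) * v by
            simp only [map_add, map_mul]; linear_combination (-ι' (X (z i))) * huv]
        exact Ideal.mul_mem_right _ _ (Ideal.mem_map_of_mem _ (Ideal.subset_span ⟨i, hi, rfl⟩))
      · rw [hw a fun i hi h => ha ⟨i, hi, h⟩, sub_self]
        exact Ideal.zero_mem _
  rw [hker]
  exact RingHom.ker_isPrime ev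

end PolynomialDeformation

section SymmetricRows

variable (K : Type*) [Field K] {n : ℕ}

abbrev SymVar (n : ℕ) := {p : Fin n × Fin n // p.1 ≤ p.2} ⊕ Fin n

def symX (i j : Fin n) : SymVar n := Sum.inl ⟨(min i j, max i j), min_le_max⟩

def symY (k : Fin n) : SymVar n := Sum.inr k

def level : SymVar n → ℕ
  | Sum.inl p => p.1.2
  | Sum.inr k => k

def finLt (n t : ℕ) : Finset (Fin n) := univ.filter fun i => (i : ℕ) < t

noncomputable def truncRow (m : ℕ) (i : Fin n) : MvPolynomial (SymVar n) K :=
  ∑ k ∈ finLt n m, X (symX i k) * X (symY k)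

theorem finLt_succ {t : ℕ} (ht : t < n) : finLt n (t + 1) = insert ⟨t, ht⟩ (finLt n t) := by
  ext k
  simp only [finLt, mem_filter, mem_univ, true_and, mem_insert, Fin.ext_iff]
  omega

theorem not_mem_finLt {t : ℕ} (ht : t < n) : (⟨t, ht⟩ : Fin n) ∉ finLt n t := by
  simp [finLt]

theorem symX_eq_symX_iff {i i' q : Fin n} (hi : i ≤ q) (hi' : i' ≤ q) :
    symX i q = symX i' q ↔ i = i' := by
  simp only [symX, Sum.inl.injEq, Subtype.mk.injEq, Prod.mk.injEq, min_eq_left hi,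
    min_eq_left hi', max_eq_right hi, max_eq_right hi', and_true]

@[simp]
theorem symX_ne_symY (i j k : Fin n) : symX i j ≠ symY k := by
  simp [symX, symY]

@[simp]
theorem symY_ne_symX (i j k : Fin n) : symY k ≠ symX i j := (symX_ne_symY i j k).symm

@[simp]
theorem symY_inj {k k' : Fin n} : symY k = symY k' ↔ k = k' := Sum.inr_injective.eq_iff

@[simp]
theorem level_symX (i j : Fin n) : level (symX i j) = max (i : ℕ) j := by
  simp [symX, level]

@[simp]
theorem level_symY (k : Fin n) : level (symY k) = k := rfl

theorem truncRow_succ {m : ℕ} (hm : m < n) (i : Fin n) :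
    truncRow K (m + 1) i = truncRow K m i + X (symX i ⟨m, hm⟩) * X (symY ⟨m, hm⟩) := by
  rw [truncRow, finLt_succ hm, sum_insert (not_mem_finLt hm), add_comm, truncRow]

theorem truncRow_mem_supported {m : ℕ} {i : Fin n} (hi : (i : ℕ) < m) :
    truncRow K m i ∈ supported K {v | level v < m} := by
  refine Subalgebra.sum_mem _ fun k hk => Subalgebra.mul_mem _ ?_ ?_ <;>
    simp only [finLt, mem_filter, mem_univ, true_and] at hk <;>
    refine X_mem_supported.2 ?_
  · simp [hi, hk]
  · exact hk

theorem truncRow_not_mem_span {m t : ℕ} (hm : m ≤ n) (ht : t < m) :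
    truncRow K m ⟨t, ht.trans_le hm⟩ ∉ Ideal.span (truncRow K m '' finLt n t) := by
  classical
  set q : Fin n := ⟨m - 1, by omega⟩
  set i₀ : Fin n := ⟨t, ht.trans_le hm⟩
  let e : SymVar n → K := fun v => if v = symX i₀ q ∨ v = symY q then 1 else 0
  have hq : ∀ i : Fin n, (i : ℕ) < m → i ≤ q := fun i hi => by simp [Fin.le_def, q]; omega
  have he : ∀ i : Fin n, (i : ℕ) < m → eval e (truncRow K m i) = if i = i₀ then 1 else 0 := by
    intro i hi
    rw [truncRow, map_sum, sum_eq_single_of_mem q (by simp [finLt, q]; omega)]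
    · simp [e, symX_eq_symX_iff (hq i hi) (hq i₀ ht)]
    · intro k _ hk
      simp [e, hk]
  have hker : Ideal.span (truncRow K m '' finLt n t) ≤ RingHom.ker (eval e) := by
    rw [Ideal.span_le]
    rintro _ ⟨i, hi, rfl⟩
    simp only [finLt, coe_filter, mem_univ, true_and, Set.mem_ofPred_eq] at hi
    rw [SetLike.mem_coe, RingHom.mem_ker, he i (by omega),
      if_neg (by simp [Fin.ext_iff, i₀]; omega)]
  intro hmem
  have h0 := hker hmem
  rw [RingHom.mem_ker, he i₀ ht, if_pos rfl] at h0
  exact one_ne_zero h0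

theorem HasOnlyKoszulSyzygies.isPrime_span_truncRow_succ {m t : ℕ} (hm : m < n) (ht : t ≤ m)
    (hK : HasOnlyKoszulSyzygies (truncRow K m) (finLt n t)) :
    (Ideal.span (truncRow K (m + 1) '' (finLt n t : Set (Fin n)))).IsPrime := by
  have hlt : ∀ i ∈ finLt n t, (i : ℕ) < m := fun i hi => by
    simp only [finLt, mem_filter, mem_univ, true_and] at hi; omega
  have hrow : truncRow K (m + 1) =
      fun i => truncRow K m i + X (symX i ⟨m, hm⟩) * X (symY ⟨m, hm⟩) :=
    funext (truncRow_succ K hm)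
  rw [hrow]
  refine hK.isPrime_span_add_X_mul_X (fun i hi => truncRow_mem_supported K (hlt i hi))
    (by simp) (fun i hi => by simp) (fun i hi i' hi' h => ?_)
    (fun i _ => symX_ne_symY _ _ _)
  exact (symX_eq_symX_iff (Fin.mk_le_mk.2 (hlt i hi).le) (Fin.mk_le_mk.2 (hlt i' hi').le)).1 h

theorem hasOnlyKoszulSyzygies_truncRow {m t : ℕ} (hm : m ≤ n) (ht : t ≤ m) :
    HasOnlyKoszulSyzygies (truncRow K m) (finLt n t) := by
  classical
  induction m generalizing t with
  | zero =>
    obtain rfl : t = 0 := by omega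
    simpa [finLt] using hasOnlyKoszulSyzygies_empty _
  | succ m ihm =>
    induction t with
    | zero => simpa [finLt] using hasOnlyKoszulSyzygies_empty _
    | succ t iht =>
      have hprime := (ihm (by omega) (by omega : t ≤ m)).isPrime_span_truncRow_succ K
        (by omega) (by omega)
      rw [finLt_succ (by omega)]
      exact (iht (by omega)).insert (not_mem_finLt _) fun p hp =>
        (hprime.mem_or_mem hp).resolve_left (truncRow_not_mem_span K hm (by omega))

end SymmetricRows

/-- For the generic symmetric `n × n` matrix `X` and generic column `Y`,
for every `1 ≤ t ≤ n - 1`, the ideal `⟨g_1, …, g_t⟩` is prime in `K[x_{ij} (i ≤ j), y_j]`. -/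
theorem span_g_isPrime_symmetric
    (K : Type*) [Field K] (n : ℕ)
    (Xmat : Matrix (Fin n) (Fin n)
      (MvPolynomial ({p : Fin n × Fin n // p.1 ≤ p.2} ⊕ Fin n) K))
    (hX : ∀ i j, Xmat i j =
      MvPolynomial.X (Sum.inl ⟨(min i j, max i j), min_le_max⟩))
    (g : Fin n → MvPolynomial ({p : Fin n × Fin n // p.1 ≤ p.2} ⊕ Fin n) K)
    (hg : ∀ i, g i = ∑ k, Xmat i k * MvPolynomial.X (Sum.inr k)) :
    ∀ t : ℕ, 1 ≤ t → t ≤ n - 1 →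
      (Ideal.span {p | ∃ i : Fin n, (i : ℕ) < t ∧ p = g i}).IsPrime := by
  intro t ht₁ ht
  have hg' : g = truncRow K n := funext fun i => by
    rw [hg, truncRow, show finLt n n = univ from filter_true_of_mem fun k _ => k.2]
    simp [hX, symX, symY]
  have hgen : {p | ∃ i : Fin n, (i : ℕ) < t ∧ p = g i} = truncRow K n '' finLt n t := by
    ext p
    simp [finLt, hg', eq_comm]
  have hprime := (hasOnlyKoszulSyzygies_truncRow K (Nat.sub_le n 1) ht).isPrime_span_truncRow_succ
    K (by omega) ht
  rwa [Nat.sub_add_cancel (by omega), ← hgen] at hprime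
end
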